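/- arXiv:2202.09981 — 7 statements merged into one kernel-verified Lean document; each statement's English description precedes it below -/
import Mathlib

section
/- For all integers n ≥ 2, m ≥ 1 and 0 ≤ r ≤ m, the F_2-dimension of D_n(r,m) equals Σ_{w=r+1}^{m} C(m,w)(n−1)^w and the F_2-dimension of C_n(r,m) equals Σ_{w=0}^{r} C(m,w)(n−1)^w, where C(m,w) denotes the binomial coefficient. -/
/-!
Write `n = k + 1`. Cutting a word of length `n ^ (m + 1)` into its `n` blocks of length `n ^ m`
turns the recursive definitions into `(k + 1)`-fold Plotkin-type constructions over codes of
length `n ^ m`: `C_n(r, m+1) ≅ C_n(r-1, m)^k × C_n(r, m)`, and, because the Berman codes are nested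
(`D_n(r, m) ⊆ D_n(r-1, m)`), also `D_n(r, m+1) ≅ D_n(r-1, m)^k × D_n(r, m)`. Both dimensions
therefore satisfy `d(r, m+1) = k d(r-1, m) + d(r, m)`, which is Pascal's rule for the partial
binomial sums `∑ C(m, w) k^w`; the base cases are the parity-check, repetition, zero and full codes.
-/

open Finset

/-- The `l`-th subvector in the concatenation decomposition:
`(subvec v l) i' = v (i'|l)`. -/
def subvec {n m : ℕ} (v : (Fin (m + 1) → Fin n) → ZMod 2) (l : Fin n) :
    (Fin m → Fin n) → ZMod 2 :=
  fun i' => v (Fin.snoc i' l)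

/-- The Berman code `D_n(r,m)`, defined recursively. -/
def BermanD (n : ℕ) : (m : ℕ) → ℕ → Set ((Fin m → Fin n) → ZMod 2)
  | 0, _ => {0}
  | m + 1, r =>
    if r = 0 then {v | ∑ i, v i = 0}
    else if m + 1 ≤ r then {0}
    else {v | (∀ l : Fin n, subvec v l ∈ BermanD n m (r - 1)) ∧
              (fun i' => ∑ l : Fin n, subvec v l i') ∈ BermanD n m r}

/-- The dual Berman code `C_n(r,m)`, defined recursively. -/
def BermanC (n : ℕ) : (m : ℕ) → ℕ → Set ((Fin m → Fin n) → ZMod 2)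
  | 0, _ => Set.univ
  | m + 1, r =>
    if r = 0 then {v | ∃ c : ZMod 2, ∀ i, v i = c}
    else if m + 1 ≤ r then Set.univ
    else {v | ∃ (u : (Fin m → Fin n) → ZMod 2) (w : Fin n → (Fin m → Fin n) → ZMod 2),
            u ∈ BermanC n m r ∧
            (∀ l : Fin n, (l : ℕ) < n - 1 → w l ∈ BermanC n m (r - 1)) ∧
            (∀ l : Fin n, (l : ℕ) = n - 1 → w l = 0) ∧
            (∀ l : Fin n, subvec v l = u + w l)}

/-- Hamming weight of a binary vector. -/
def hwt {n m : ℕ} (v : (Fin m → Fin n) → ZMod 2) : ℕ :=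
  (Finset.univ.filter fun i => v i ≠ 0).card

/-- `preceq j i` means `j ⪯ i`: for every position `k`, either `j k = 0` or `j k = i k`. -/
def preceq {n m : ℕ} (j i : Fin m → Fin n) : Prop :=
  ∀ k, (j k : ℕ) = 0 ∨ j k = i k

instance {n m : ℕ} (j i : Fin m → Fin n) : Decidable (preceq j i) :=
  inferInstanceAs (Decidable (∀ k, (j k : ℕ) = 0 ∨ j k = i k))

/-- Hamming weight of an index tuple. -/
def wtTuple {n m : ℕ} (i : Fin m → Fin n) : ℕ :=
  (Finset.univ.filter fun k => (i k : ℕ) ≠ 0).card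

/-- The vector `c_m(i')`: the indicator of `{i : i ⪯ i'}`. -/
def cVec {n : ℕ} (m : ℕ) (i' : Fin m → Fin n) : (Fin m → Fin n) → ZMod 2 :=
  fun i => if preceq i i' then 1 else 0

/-- The vector `d_m(i')`: the indicator of `{i : i' ⪯ i}`. -/
def dVec {n : ℕ} (m : ℕ) (i' : Fin m → Fin n) : (Fin m → Fin n) → ZMod 2 :=
  fun i => if preceq i' i then 1 else 0

/-- The matrix `A_m = A_1^{⊗m}`: its entry in row `i` and column `j` is `1` iff `j ⪯ i`. -/
def Amat (n m : ℕ) : Matrix (Fin m → Fin n) (Fin m → Fin n) (ZMod 2) :=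
  fun i j => if preceq j i then 1 else 0

open Module

namespace Submodule

variable {K V : Type*} [Field K] [AddCommGroup V] [Module K V]

/-- `(a, u) ↦ (u + a₀ | … | u + a_{k-1} | u)`, the `(k+1)`-fold Plotkin `(u | u + v)` map. -/
def plotkinMap (A B : Submodule K V) (k : ℕ) : (Fin k → A) × B →ₗ[K] Fin (k + 1) → V where
  toFun p := Fin.snoc (fun i => (p.2 : V) + p.1 i) p.2
  map_add' p q := by
    ext l
    induction l using Fin.lastCases <;> simp
    abel
  map_smul' c p := by
    ext l
    induction l using Fin.lastCases <;> simp [smul_add]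

def plotkin (A B : Submodule K V) (k : ℕ) : Submodule K (Fin (k + 1) → V) :=
  LinearMap.range (plotkinMap A B k)

theorem mem_plotkin {A B : Submodule K V} {k : ℕ} {w : Fin (k + 1) → V} :
    w ∈ plotkin A B k ↔ w (Fin.last k) ∈ B ∧ ∀ i : Fin k, w i.castSucc - w (Fin.last k) ∈ A := by
  constructor
  · rintro ⟨⟨a, u⟩, rfl⟩
    simp [plotkinMap]
  · rintro ⟨hB, hA⟩
    refine ⟨(fun i => ⟨_, hA i⟩, ⟨_, hB⟩), funext fun l => ?_⟩
    induction l using Fin.lastCases <;> simp [plotkinMap]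

theorem plotkinMap_injective (A B : Submodule K V) (k : ℕ) :
    Function.Injective (plotkinMap A B k) := by
  rw [← LinearMap.ker_eq_bot, LinearMap.ker_eq_bot']
  rintro ⟨a, u⟩ h
  have hu : (u : V) = 0 := by simpa [plotkinMap] using congrFun h (Fin.last k)
  have ha : ∀ i, (a i : V) = 0 := fun i => by
    simpa [plotkinMap, hu] using congrFun h i.castSucc
  ext i <;> simp [ha, hu]

theorem finrank_plotkin [FiniteDimensional K V] (A B : Submodule K V) (k : ℕ) :
    finrank K (plotkin A B k) = k * finrank K A + finrank K B := by
  rw [plotkin, LinearMap.finrank_range_of_inj (plotkinMap_injective A B k)]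
  simp [finrank_prod, finrank_pi_fintype]

/-- Named for duality: for codes `A ≤ B`, the dual code of `plotkin A B k` is `plotkinDual` of the
dual codes of `A` and `B`. -/
def plotkinDual {ι : Type*} [Fintype ι] (A B : Submodule K V) : Submodule K (ι → V) where
  carrier := {w | (∀ i, w i ∈ A) ∧ ∑ i, w i ∈ B}
  add_mem' := fun ⟨ha, hb⟩ ⟨ha', hb'⟩ =>
    ⟨fun i => A.add_mem (ha i) (ha' i), by simpa [sum_add_distrib] using B.add_mem hb hb'⟩
  zero_mem' := ⟨fun _ => A.zero_mem, by simp⟩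
  smul_mem' c _ := fun ⟨ha, hb⟩ =>
    ⟨fun i => A.smul_mem c (ha i), by simpa [← smul_sum] using B.smul_mem c hb⟩

theorem plotkinDual_mono {ι : Type*} [Fintype ι] {A A' B B' : Submodule K V} (hA : A ≤ A')
    (hB : B ≤ B') : (plotkinDual A B : Submodule K (ι → V)) ≤ plotkinDual A' B' :=
  fun _ ⟨ha, hb⟩ => ⟨fun i => hA (ha i), hB hb⟩

def plotkinDualMap (A B : Submodule K V) (k : ℕ) : (Fin k → A) × B →ₗ[K] Fin (k + 1) → V where
  toFun p := Fin.snoc (fun i => (p.1 i : V)) (p.2 - ∑ i, (p.1 i : V))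
  map_add' p q := by
    ext l
    induction l using Fin.lastCases <;> simp [sum_add_distrib]
    abel
  map_smul' c p := by
    ext l
    induction l using Fin.lastCases <;> simp [smul_sub, smul_sum]

theorem plotkinDualMap_injective (A B : Submodule K V) (k : ℕ) :
    Function.Injective (plotkinDualMap A B k) := by
  rw [← LinearMap.ker_eq_bot, LinearMap.ker_eq_bot']
  rintro ⟨a, u⟩ h
  have ha : ∀ i, (a i : V) = 0 := fun i => by
    simpa [plotkinDualMap] using congrFun h i.castSucc
  have hu : (u : V) = 0 := by simpa [plotkinDualMap, ha] using congrFun h (Fin.last k)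
  ext i <;> simp [ha, hu]

theorem range_plotkinDualMap {A B : Submodule K V} (hBA : B ≤ A) (k : ℕ) :
    LinearMap.range (plotkinDualMap A B k) = plotkinDual A B := by
  ext w
  constructor
  · rintro ⟨⟨a, u⟩, rfl⟩
    refine ⟨fun l => ?_, by simp [plotkinDualMap, Fin.sum_univ_castSucc]⟩
    induction l using Fin.lastCases with
    | last => simpa [plotkinDualMap] using A.sub_mem (hBA u.2) (A.sum_mem fun i _ => (a i).2)
    | cast i => simp [plotkinDualMap]
  · rintro ⟨hA, hB⟩
    refine ⟨(fun i => ⟨w i.castSucc, hA _⟩, ⟨∑ l, w l, hB⟩), funext fun l => ?_⟩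
    induction l using Fin.lastCases <;> simp [plotkinDualMap, Fin.sum_univ_castSucc]

theorem finrank_plotkinDual [FiniteDimensional K V] {A B : Submodule K V} (hBA : B ≤ A)
    (k : ℕ) :
    finrank K (plotkinDual A B : Submodule K (Fin (k + 1) → V)) =
      k * finrank K A + finrank K B := by
  rw [← range_plotkinDualMap hBA, LinearMap.finrank_range_of_inj (plotkinDualMap_injective A B k)]
  simp [finrank_prod, finrank_pi_fintype]

variable (K) in
def parityCheck (ι : Type*) [Fintype ι] : Submodule K (ι → K) :=
  LinearMap.ker (Fintype.linearCombination K fun _ => (1 : K))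

@[simp] theorem mem_parityCheck {ι : Type*} [Fintype ι] {v : ι → K} :
    v ∈ parityCheck K ι ↔ ∑ i, v i = 0 := by
  simp [parityCheck, Fintype.linearCombination_apply]

theorem finrank_parityCheck (ι : Type*) [Fintype ι] [Nonempty ι] :
    finrank K (parityCheck K ι) = Fintype.card ι - 1 := by
  classical
  rw [parityCheck]
  set f := Fintype.linearCombination K fun _ : ι => (1 : K)
  have hsurj : Function.Surjective f := fun c =>
    ⟨Pi.single (Classical.arbitrary ι) c, by simp [f, Fintype.linearCombination_apply]⟩
  have := f.finrank_range_add_finrank_ker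
  rw [LinearMap.range_eq_top.2 hsurj, finrank_top, finrank_self, finrank_fintype_fun_eq_card] at this
  omega

end Submodule

theorem sum_range_choose_mul_pow (x m : ℕ) :
    ∑ w ∈ range (m + 1), m.choose w * x ^ w = (x + 1) ^ m := by
  simp [add_pow, mul_comm]

theorem sum_Icc_one_choose_mul_pow (x m : ℕ) :
    ∑ w ∈ Icc 1 m, m.choose w * x ^ w = (x + 1) ^ m - 1 := by
  rw [← sum_range_choose_mul_pow, range_eq_Ico, sum_eq_sum_Ico_succ_bot (by omega),
    Nat.choose_zero_right, pow_zero, mul_one, add_tsub_cancel_left, Ico_add_one_right_eq_Icc]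

theorem sum_range_choose_succ_mul_pow (x m r : ℕ) :
    ∑ w ∈ range (r + 2), (m + 1).choose w * x ^ w =
      x * ∑ w ∈ range (r + 1), m.choose w * x ^ w + ∑ w ∈ range (r + 2), m.choose w * x ^ w := by
  have hx : ∀ w, m.choose w * x ^ (w + 1) = x * (m.choose w * x ^ w) := fun w => by ring
  simp only [sum_range_succ' _ (r + 1), Nat.choose_succ_succ', Nat.choose_zero_right, add_mul,
    sum_add_distrib, mul_sum, hx]
  ring

theorem sum_Icc_choose_succ_mul_pow (x : ℕ) {m r : ℕ} (h : r ≤ m) :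
    ∑ w ∈ Icc (r + 1) (m + 1), (m + 1).choose w * x ^ w =
      x * ∑ w ∈ Icc r m, m.choose w * x ^ w + ∑ w ∈ Icc (r + 1) m, m.choose w * x ^ w := by
  have hx : ∀ w, m.choose w * x ^ (w + 1) = x * (m.choose w * x ^ w) := fun w => by ring
  have htop : ∑ w ∈ Icc (r + 1) (m + 1), m.choose w * x ^ w =
      ∑ w ∈ Icc (r + 1) m, m.choose w * x ^ w := by
    rw [sum_Icc_succ_top (by omega), Nat.choose_succ_self, zero_mul, add_zero]
  rw [← htop, ← map_add_right_Icc r m 1, sum_map, sum_map]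
  simp only [addRightEmbedding_apply, Nat.choose_succ_succ, add_mul, sum_add_distrib, mul_sum, hx]

open Submodule

abbrev Word (n m : ℕ) := (Fin m → Fin n) → ZMod 2

def subvecEquiv (n m : ℕ) : Word n (m + 1) ≃ₗ[ZMod 2] (Fin n → Word n m) :=
  (LinearEquiv.funCongrLeft (ZMod 2) (ZMod 2) (Fin.snocEquiv fun _ => Fin n)).trans
    (LinearEquiv.curry (ZMod 2) (ZMod 2) _ _)

@[simp] theorem subvecEquiv_apply {n m : ℕ} (v : Word n (m + 1)) (l : Fin n) :
    subvecEquiv n m v l = subvec v l := rfl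

theorem sum_sum_subvec {n m : ℕ} (v : Word n (m + 1)) :
    ∑ i, ∑ l, subvec v l i = ∑ i, v i := by
  rw [Finset.sum_comm, ← Fintype.sum_prod_type']
  exact (Fin.snocEquiv fun _ => Fin n).sum_comp v

def bermanD (n : ℕ) : (m : ℕ) → ℕ → Submodule (ZMod 2) (Word n m)
  | 0, _ => ⊥
  | m + 1, r =>
    if r = 0 then parityCheck (ZMod 2) _
    else if m + 1 ≤ r then ⊥
    else (plotkinDual (bermanD n m (r - 1)) (bermanD n m r)).comap (subvecEquiv n m).toLinearMap

/-- The alphabet size is written `k + 1`, so that the last block `n - 1` is `Fin.last k`. -/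
def bermanC (k : ℕ) : (m : ℕ) → ℕ → Submodule (ZMod 2) (Word (k + 1) m)
  | 0, _ => ⊤
  | m + 1, r =>
    if r = 0 then ZMod 2 ∙ 1
    else if m + 1 ≤ r then ⊤
    else (plotkin (bermanC k m (r - 1)) (bermanC k m r) k).comap
      (subvecEquiv (k + 1) m).toLinearMap

theorem coe_bermanD (n : ℕ) : ∀ m r, (bermanD n m r : Set (Word n m)) = BermanD n m r
  | 0, r => by simp [bermanD, BermanD]
  | m + 1, r => by
    ext v
    simp only [bermanD, BermanD]
    split_ifs
    · simp
    · simp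
    · simp [plotkinDual, ← coe_bermanD n m, Finset.sum_fn]

theorem coe_bermanC (k : ℕ) : ∀ m r, (bermanC k m r : Set (Word (k + 1) m)) = BermanC (k + 1) m r
  | 0, r => by simp [bermanC, BermanC]
  | m + 1, r => by
    ext v
    simp only [bermanC, BermanC]
    split_ifs
    · simp [mem_span_singleton, funext_iff, eq_comm]
    · simp
    · simp only [← coe_bermanC k m, SetLike.mem_coe, mem_comap, LinearEquiv.coe_coe, mem_plotkin,
        subvecEquiv_apply, Set.mem_ofPred_eq]
      constructor
      · rintro ⟨hB, hA⟩
        refine ⟨_, fun l => subvec v l - subvec v (Fin.last k), hB, fun l hl => ?_,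
          fun l hl => ?_, fun l => (add_sub_cancel _ _).symm⟩
        · obtain ⟨i, rfl⟩ : ∃ i : Fin k, i.castSucc = l := ⟨⟨l, by omega⟩, rfl⟩
          exact hA i
        · simp [show l = Fin.last k from Fin.ext (by simpa using hl)]
      · rintro ⟨u, w, hu, hw, hw0, hv⟩
        have hlast : subvec v (Fin.last k) = u := by simp [hv, hw0]
        refine ⟨hlast ▸ hu, fun i => ?_⟩
        rw [hlast, hv, add_sub_cancel_left]
        exact hw _ (by simp)

theorem bermanD_succ_le (n : ℕ) : ∀ m r, bermanD n m (r + 1) ≤ bermanD n m r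
  | 0, _ => le_rfl
  | m + 1, r => by
    by_cases htop : m + 1 ≤ r + 1
    · simp [bermanD, htop]
    rcases r with _ | r
    · obtain ⟨m, rfl⟩ : ∃ m', m = m' + 1 := ⟨m - 1, by omega⟩
      intro v hv
      simp only [bermanD, if_neg htop] at hv
      -- the parity of `v` is the parity of the sum of its blocks
      have hsum := bermanD_succ_le n (m + 1) 0 hv.2
      simp only [bermanD, if_pos, mem_parityCheck] at hsum ⊢
      rw [← sum_sum_subvec]
      simpa [Finset.sum_apply] using hsum
    · simp only [bermanD, if_neg htop, if_neg (by omega : ¬m + 1 ≤ r + 1), Nat.add_one_ne_zero,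
        if_false, Nat.add_sub_cancel]
      exact comap_mono (plotkinDual_mono (bermanD_succ_le n m r) (bermanD_succ_le n m (r + 1)))

theorem bermanD_self (n m : ℕ) : bermanD n m m = ⊥ := by
  cases m <;> simp [bermanD]

theorem bermanC_self (k m : ℕ) : bermanC k m m = ⊤ := by
  cases m <;> simp [bermanC]

theorem finrank_bermanD_self (n m : ℕ) : finrank (ZMod 2) (bermanD n m m) = 0 := by
  rw [bermanD_self, finrank_bot]

theorem finrank_bermanC_self (k m : ℕ) : finrank (ZMod 2) (bermanC k m m) = (k + 1) ^ m := by
  rw [bermanC_self, finrank_top, finrank_fintype_fun_eq_card, Fintype.card_fun, Fintype.card_fin,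
    Fintype.card_fin]

theorem finrank_bermanD_zero (k m : ℕ) :
    finrank (ZMod 2) (bermanD (k + 1) (m + 1) 0) = (k + 1) ^ (m + 1) - 1 := by
  rw [bermanD, if_pos rfl, finrank_parityCheck, Fintype.card_fun, Fintype.card_fin,
    Fintype.card_fin]

theorem finrank_bermanC_zero (k m : ℕ) : finrank (ZMod 2) (bermanC k (m + 1) 0) = 1 := by
  rw [bermanC, if_pos rfl, finrank_span_singleton one_ne_zero]

theorem finrank_bermanD_succ (k : ℕ) {m r : ℕ} (hr0 : r ≠ 0) (hrm : r ≤ m) :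
    finrank (ZMod 2) (bermanD (k + 1) (m + 1) r) =
      k * finrank (ZMod 2) (bermanD (k + 1) m (r - 1)) +
        finrank (ZMod 2) (bermanD (k + 1) m r) := by
  obtain ⟨s, rfl⟩ := Nat.exists_eq_add_one_of_ne_zero hr0
  rw [bermanD, if_neg hr0, if_neg (by omega), comap_equiv_eq_map_symm,
    LinearEquiv.finrank_map_eq, Nat.add_sub_cancel, finrank_plotkinDual (bermanD_succ_le _ _ _)]

theorem finrank_bermanC_succ (k : ℕ) {m r : ℕ} (hr0 : r ≠ 0) (hrm : r ≤ m) :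
    finrank (ZMod 2) (bermanC k (m + 1) r) =
      k * finrank (ZMod 2) (bermanC k m (r - 1)) + finrank (ZMod 2) (bermanC k m r) := by
  rw [bermanC, if_neg hr0, if_neg (by omega), comap_equiv_eq_map_symm,
    LinearEquiv.finrank_map_eq, finrank_plotkin]

theorem finrank_bermanD (k : ℕ) {m r : ℕ} (hr : r ≤ m) :
    finrank (ZMod 2) (bermanD (k + 1) m r) = ∑ w ∈ Icc (r + 1) m, m.choose w * k ^ w := by
  induction m generalizing r with
  | zero =>
    obtain rfl : r = 0 := by omega
    simp [finrank_bermanD_self]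
  | succ m ih =>
    obtain rfl | hr0 := Nat.eq_zero_or_pos r
    · rw [finrank_bermanD_zero, sum_Icc_one_choose_mul_pow]
    obtain rfl | hrm := hr.eq_or_lt
    · simp [finrank_bermanD_self]
    obtain ⟨s, rfl⟩ := Nat.exists_eq_add_one_of_ne_zero hr0.ne'
    rw [finrank_bermanD_succ k hr0.ne' (by omega), Nat.add_sub_cancel, ih (by omega), ih (by omega),
      sum_Icc_choose_succ_mul_pow k (by omega)]

theorem finrank_bermanC (k : ℕ) {m r : ℕ} (hr : r ≤ m) :
    finrank (ZMod 2) (bermanC k m r) = ∑ w ∈ range (r + 1), m.choose w * k ^ w := by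
  induction m generalizing r with
  | zero =>
    obtain rfl : r = 0 := by omega
    simp [finrank_bermanC_self]
  | succ m ih =>
    obtain rfl | hr0 := Nat.eq_zero_or_pos r
    · simp [finrank_bermanC_zero]
    obtain rfl | hrm := hr.eq_or_lt
    · rw [finrank_bermanC_self, sum_range_choose_mul_pow]
    obtain ⟨s, rfl⟩ := Nat.exists_eq_add_one_of_ne_zero hr0.ne'
    rw [finrank_bermanC_succ k hr0.ne' (by omega), Nat.add_sub_cancel, ih (by omega), ih (by omega),
      sum_range_choose_succ_mul_pow]

theorem berman_dim_general (n m r : ℕ) (hn : 2 ≤ n) (hr : r ≤ m) :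
    Module.finrank (ZMod 2) ↥(Submodule.span (ZMod 2) (BermanD n m r)) =
      ∑ w ∈ Finset.Icc (r + 1) m, m.choose w * (n - 1) ^ w ∧
    Module.finrank (ZMod 2) ↥(Submodule.span (ZMod 2) (BermanC n m r)) =
      ∑ w ∈ Finset.range (r + 1), m.choose w * (n - 1) ^ w := by
  obtain ⟨k, rfl⟩ : ∃ k, n = k + 1 := ⟨n - 1, by omega⟩
  rw [← coe_bermanD, ← coe_bermanC, span_eq, span_eq, Nat.add_sub_cancel]
  exact ⟨finrank_bermanD k hr, finrank_bermanC k hr⟩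

/-- dimensions of the Berman code and the dual Berman code. -/
theorem berman_dim (n m r : ℕ) (hn : 2 ≤ n) (hm : 1 ≤ m) (hr : r ≤ m) :
    Module.finrank (ZMod 2) ↥(Submodule.span (ZMod 2) (BermanD n m r)) =
      ∑ w ∈ Finset.Icc (r + 1) m, m.choose w * (n - 1) ^ w ∧
    Module.finrank (ZMod 2) ↥(Submodule.span (ZMod 2) (BermanC n m r)) =
      ∑ w ∈ Finset.range (r + 1), m.choose w * (n - 1) ^ w :=
  berman_dim_general n m r hn hr
end

section
/- For all integers n ≥ 2, m ≥ 1 and 0 ≤ r ≤ m, the dual code of C_n(r,m) with respect to the standard bilinear form ⟨u,v⟩ = Σ_{i} u_i v_i on F_2^{n^m} equals D_n(r,m); that is, C_n(r,m)^⊥ = D_n(r,m). -/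
open Finset

lemma subvec_zero {n m : ℕ} (l : Fin n) :
    subvec (0 : (Fin (m + 1) → Fin n) → ZMod 2) l = 0 := rfl

lemma subvec_add {n m : ℕ} (v w : (Fin (m + 1) → Fin n) → ZMod 2) (l : Fin n) :
    subvec (v + w) l = subvec v l + subvec w l := rfl

def snocEquiv (n m : ℕ) : (Fin n) × (Fin m → Fin n) ≃ (Fin (m + 1) → Fin n) where
  toFun p := Fin.snoc p.2 p.1
  invFun v := (v (Fin.last m), Fin.init v)
  left_inv p := by simp
  right_inv v := by simp

lemma sum_split (n m : ℕ) (f : (Fin (m + 1) → Fin n) → ZMod 2) :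
    ∑ i, f i = ∑ l : Fin n, ∑ i' : Fin m → Fin n, f (Fin.snoc i' l) := by
  calc ∑ i, f i = ∑ p : Fin n × (Fin m → Fin n), f (Fin.snoc p.2 p.1) :=
        (Fintype.sum_equiv (snocEquiv n m) _ _ (fun p => rfl)).symm
    _ = ∑ l : Fin n, ∑ i' : Fin m → Fin n, f (Fin.snoc i' l) :=
        Fintype.sum_prod_type _

lemma inner_split (n m : ℕ) (u v : (Fin (m + 1) → Fin n) → ZMod 2) :
    ∑ i, u i * v i = ∑ l : Fin n, ∑ i', subvec u l i' * subvec v l i' :=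
  sum_split n m (fun i => u i * v i)

lemma zero_mem_D (n : ℕ) : ∀ m r, (0 : (Fin m → Fin n) → ZMod 2) ∈ BermanD n m r := by
  intro m
  induction m with
  | zero => intro r; simp [BermanD]
  | succ m ih =>
    intro r
    simp only [BermanD]
    split
    · simp
    · split
      · simp
      · refine ⟨fun l => ?_, ?_⟩
        · rw [subvec_zero]; exact ih _
        · have h : (fun i' => ∑ l : Fin n, subvec (0 : (Fin (m+1) → Fin n) → ZMod 2) l i')
              = (0 : (Fin m → Fin n) → ZMod 2) := by
            funext i'; simp [subvec_zero]
          rw [h]; exact ih _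

lemma add_mem_D (n : ℕ) : ∀ m r, ∀ v w : (Fin m → Fin n) → ZMod 2,
    v ∈ BermanD n m r → w ∈ BermanD n m r → v + w ∈ BermanD n m r := by
  intro m
  induction m with
  | zero => intro r v w hv hw; simp_all [BermanD]
  | succ m ih =>
    intro r v w hv hw
    simp only [BermanD] at hv hw ⊢
    split
    · rename_i h; rw [if_pos h] at hv hw
      simp only [Set.mem_setOf_eq] at *
      simp [Finset.sum_add_distrib, hv, hw]
    · rename_i h; rw [if_neg h] at hv hw
      split
      · rename_i h2; rw [if_pos h2] at hv hw; simp_all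
      · rename_i h2; rw [if_neg h2] at hv hw
        obtain ⟨hv1, hv2⟩ := hv
        obtain ⟨hw1, hw2⟩ := hw
        refine ⟨fun l => ?_, ?_⟩
        · rw [subvec_add]; exact ih _ _ _ (hv1 l) (hw1 l)
        · have h3 : (fun i' => ∑ l : Fin n, subvec (v + w) l i')
              = (fun i' => ∑ l : Fin n, subvec v l i') + (fun i' => ∑ l : Fin n, subvec w l i') := by
            funext i'; simp [subvec_add, Finset.sum_add_distrib]
          rw [h3]; exact ih _ _ _ hv2 hw2

lemma sum_mem_D (n m r : ℕ) {ι : Type} (s : Finset ι) (f : ι → (Fin m → Fin n) → ZMod 2)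
    (hf : ∀ l ∈ s, f l ∈ BermanD n m r) : ∑ l ∈ s, f l ∈ BermanD n m r :=
  Finset.sum_induction f (· ∈ BermanD n m r) (fun a b ha hb => add_mem_D n m r a b ha hb)
    (zero_mem_D n m r) hf

lemma zero_mem_C (n : ℕ) : ∀ m r, (0 : (Fin m → Fin n) → ZMod 2) ∈ BermanC n m r := by
  intro m
  induction m with
  | zero => intro r; simp [BermanC]
  | succ m ih =>
    intro r
    simp only [BermanC]
    split
    · exact ⟨0, fun i => rfl⟩
    · split
      · trivial
      · refine ⟨0, fun _ => 0, ih _, fun l _ => ih _, fun l _ => rfl, fun l => ?_⟩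
        rw [subvec_zero]; simp

lemma D_step (n : ℕ) : ∀ m r, 1 ≤ r → r ≤ m →
    BermanD n m r ⊆ BermanD n m (r - 1) := by
  intro m
  induction m with
  | zero => intro r h1 h2; omega
  | succ m ih =>
    intro r h1 h2 v hv
    by_cases hrm : r = m + 1
    · subst hrm
      have hv0 : v = 0 := by
        simp only [BermanD, if_neg (by omega : ¬ (m+1 = 0)), if_pos (le_refl (m+1))] at hv
        simpa using hv
      rw [hv0]; exact zero_mem_D n _ _
    · have hrm' : r ≤ m := by omega
      simp only [BermanD] at hv ⊢
      rw [if_neg (by omega : ¬ r = 0), if_neg (by omega : ¬ m + 1 ≤ r)] at hv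
      obtain ⟨hv1, hv2⟩ := hv
      by_cases hr1 : r = 1
      · subst hr1
        rw [if_pos rfl]
        show ∑ i, v i = 0
        rw [sum_split]
        obtain ⟨m', rfl⟩ : ∃ m', m = m' + 1 := ⟨m - 1, by omega⟩
        have h : ∀ l, ∑ i', subvec v l i' = 0 := by
          intro l
          have := hv1 l
          simpa [BermanD] using this
        calc ∑ l : Fin n, ∑ i' : Fin (m' + 1) → Fin n, v (Fin.snoc i' l)
            = ∑ _l : Fin n, (0 : ZMod 2) := Finset.sum_congr rfl (fun l _ => h l)
          _ = 0 := by simp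
      · rw [if_neg (by omega : ¬ r - 1 = 0), if_neg (by omega : ¬ m + 1 ≤ r - 1)]
        exact ⟨fun l => ih (r-1) (by omega) (by omega) (hv1 l),
               ih r (by omega) hrm' hv2⟩

lemma berman_aux (n : ℕ) (hn : 2 ≤ n) : ∀ m r, 1 ≤ m → r ≤ m →
    {u : (Fin m → Fin n) → ZMod 2 | ∀ v ∈ BermanC n m r, ∑ i, u i * v i = 0} =
      BermanD n m r := by
  intro m
  induction m with
  | zero => intro r h; omega
  | succ m ih =>
    intro r _ hr
    by_cases hr0 : r = 0
    · -- repetition code vs parity code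
      subst hr0
      ext u
      simp only [Set.mem_setOf_eq, BermanD, BermanC, if_pos rfl]
      constructor
      · intro hu
        have h1 := hu (fun _ => 1) ⟨1, fun _ => rfl⟩
        simpa using h1
      · rintro hu v ⟨c, hc⟩
        calc ∑ i, u i * v i = (∑ i, u i) * c := by
              rw [Finset.sum_mul]
              exact Finset.sum_congr rfl (fun i _ => by rw [hc i])
          _ = 0 := by rw [hu, zero_mul]
    · by_cases hrm : r = m + 1
      · -- C = univ, D = {0}
        subst hrm
        ext u
        simp only [Set.mem_setOf_eq, BermanD, BermanC, if_neg hr0,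
          if_pos (le_refl (m + 1))]
        constructor
        · intro hu
          have h1 : u = 0 := by
            funext i
            have h2 := hu (fun j => if j = i then 1 else 0) (Set.mem_univ _)
            simpa [mul_ite, mul_one, mul_zero, Finset.sum_ite_eq'] using h2
          simpa using h1
        · intro hu v _
          have h1 : u = 0 := by simpa using hu
          simp [h1]
      · -- main recursive case: 1 ≤ r ≤ m
        have hm1 : 1 ≤ m := by omega
        have hrm' : r ≤ m := by omega
        have ihr := ih r hm1 hrm'
        have ihr1 := ih (r - 1) hm1 (by omega)
        have hD : BermanD n (m+1) r = {v | (∀ l : Fin n, subvec v l ∈ BermanD n m (r - 1)) ∧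
              (fun i' => ∑ l : Fin n, subvec v l i') ∈ BermanD n m r} := by
          simp only [BermanD]
          rw [if_neg hr0, if_neg (by omega : ¬ m + 1 ≤ r)]
        have hC : BermanC n (m+1) r = {v | ∃ (u : (Fin m → Fin n) → ZMod 2)
              (w : Fin n → (Fin m → Fin n) → ZMod 2),
            u ∈ BermanC n m r ∧
            (∀ l : Fin n, (l : ℕ) < n - 1 → w l ∈ BermanC n m (r - 1)) ∧
            (∀ l : Fin n, (l : ℕ) = n - 1 → w l = 0) ∧
            (∀ l : Fin n, subvec v l = u + w l)} := by
          simp only [BermanC]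
          rw [if_neg hr0, if_neg (by omega : ¬ m + 1 ≤ r)]
        ext u
        simp only [Set.mem_setOf_eq]
        constructor
        · -- dual ⊆ D
          intro hu
          rw [hD]
          -- step (a): the sum of subvectors lies in D n m r
          have hS : (fun i' => ∑ l : Fin n, subvec u l i') ∈ BermanD n m r := by
            rw [← ihr]
            intro x hx
            have hv : (fun i => x (Fin.init i)) ∈ BermanC n (m+1) r := by
              rw [hC]
              refine ⟨x, fun _ => 0, hx, fun l _ => zero_mem_C n m _, fun l _ => rfl, fun l => ?_⟩
              funext i'
              simp [subvec, Fin.init_snoc]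
            have h2 := hu _ hv
            rw [inner_split] at h2
            have h3 : ∀ l : Fin n, ∀ i', subvec (fun i => x (Fin.init i)) l i' = x i' := by
              intro l i'; simp [subvec, Fin.init_snoc]
            calc ∑ i', (∑ l : Fin n, subvec u l i') * x i'
                = ∑ i', ∑ l : Fin n, subvec u l i' * x i' := by
                  exact Finset.sum_congr rfl (fun i' _ => Finset.sum_mul ..)
              _ = ∑ l : Fin n, ∑ i', subvec u l i' * x i' := Finset.sum_comm
              _ = 0 := by
                  rw [← h2]
                  exact Finset.sum_congr rfl (fun l _ => Finset.sum_congr rfl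
                    (fun i' _ => by rw [h3 l i']))
          -- step (b): subvectors with index < n - 1 lie in D n m (r-1)
          have hB : ∀ l₀ : Fin n, (l₀ : ℕ) < n - 1 → subvec u l₀ ∈ BermanD n m (r - 1) := by
            intro l₀ hl₀
            rw [← ihr1]
            intro x hx
            have hv : (fun i => if i (Fin.last m) = l₀ then x (Fin.init i) else 0)
                ∈ BermanC n (m+1) r := by
              rw [hC]
              refine ⟨0, fun l => if l = l₀ then x else 0, zero_mem_C n m _,
                fun l _ => ?_, fun l hl => ?_, fun l => ?_⟩
              · dsimp only
                split
                · exact hx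
                · exact zero_mem_C n m _
              · have : l ≠ l₀ := by intro h; subst h; omega
                simp [this]
              · funext i'
                by_cases hll : l = l₀ <;>
                  simp [subvec, Fin.snoc_last, Fin.init_snoc, hll]
            have h2 := hu _ hv
            rw [inner_split] at h2
            have h3 : ∀ l : Fin n, ∑ i', subvec u l i' *
                subvec (fun i => if i (Fin.last m) = l₀ then x (Fin.init i) else 0) l i'
                = if l = l₀ then ∑ i', subvec u l i' * x i' else 0 := by
              intro l
              by_cases hll : l = l₀ <;>
                simp [subvec, Fin.snoc_last, Fin.init_snoc, hll]
            rw [Finset.sum_congr rfl (fun l _ => h3 l), Finset.sum_ite_eq' Finset.univ l₀] at h2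
            simpa using h2
          refine ⟨fun l => ?_, hS⟩
          by_cases hl : (l : ℕ) < n - 1
          · exact hB l hl
          · -- l is the last index
            have hl' : (l : ℕ) = n - 1 := by have := l.isLt; omega
            -- subvec u l = S + ∑ over the others
            have hsum : subvec u l = (fun i' => ∑ l' : Fin n, subvec u l' i')
                + ∑ l' ∈ Finset.univ.filter (fun l' : Fin n => l' ≠ l), subvec u l' := by
              funext i'
              have h4 : ∑ l' : Fin n, subvec u l' i'
                  = subvec u l i' + ∑ l' ∈ Finset.univ.filter (fun l' : Fin n => l' ≠ l),
                      subvec u l' i' := by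
                rw [← Finset.sum_filter_add_sum_filter_not Finset.univ (fun l' : Fin n => l' = l)]
                congr 1
                rw [Finset.filter_eq' Finset.univ l]
                simp
              have h5 : (∑ l' ∈ Finset.univ.filter (fun l' : Fin n => l' ≠ l), subvec u l') i'
                  = ∑ l' ∈ Finset.univ.filter (fun l' : Fin n => l' ≠ l), subvec u l' i' := by
                simp [Finset.sum_apply]
              rw [Pi.add_apply, h5, h4]
              rw [add_assoc, CharTwo.add_self_eq_zero, add_zero]
            rw [hsum]
            refine add_mem_D n m (r-1) _ _ (D_step n m r (by omega) hrm' hS) ?_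
            refine sum_mem_D n m (r-1) _ _ (fun l' hl' => ?_)
            simp only [Finset.mem_filter] at hl'
            have : (l' : ℕ) < n - 1 := by
              have h6 := l'.isLt
              have h7 : (l' : ℕ) ≠ (l : ℕ) := fun h => hl'.2 (Fin.ext h)
              omega
            exact hB l' this
        · -- D ⊆ dual
          intro hu v hv
          rw [hD] at hu
          obtain ⟨h1, h2⟩ := hu
          rw [hC] at hv
          obtain ⟨u', w, hu', hw1, hw2, hvs⟩ := hv
          rw [inner_split]
          have h3 : ∀ l : Fin n, ∑ i', subvec u l i' * subvec v l i'
              = (∑ i', subvec u l i' * u' i') + ∑ i', subvec u l i' * w l i' := by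
            intro l
            rw [hvs l, ← Finset.sum_add_distrib]
            exact Finset.sum_congr rfl (fun i' _ => by simp [mul_add])
          rw [Finset.sum_congr rfl (fun l _ => h3 l), Finset.sum_add_distrib]
          have hA : ∑ l : Fin n, ∑ i', subvec u l i' * u' i' = 0 := by
            rw [← ihr] at h2
            have h4 := h2 u' hu'
            rw [← h4, Finset.sum_comm]
            exact Finset.sum_congr rfl (fun i' _ => (Finset.sum_mul ..).symm)
          have hBt : ∀ l : Fin n, ∑ i', subvec u l i' * w l i' = 0 := by
            intro l
            by_cases hl : (l : ℕ) < n - 1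
            · rw [← ihr1] at h1
              exact h1 l (w l) (hw1 l hl)
            · have hl' : (l : ℕ) = n - 1 := by have := l.isLt; omega
              rw [hw2 l hl']
              simp
          rw [hA, Finset.sum_congr rfl (fun l _ => hBt l)]
          simp

/-- `C_n(r,m)^⊥ = D_n(r,m)` with respect to the standard bilinear form. -/
theorem berman_duality (n m r : ℕ) (hn : 2 ≤ n) (hm : 1 ≤ m) (hr : r ≤ m) :
    {u : (Fin m → Fin n) → ZMod 2 | ∀ v ∈ BermanC n m r, ∑ i, u i * v i = 0} =
      BermanD n m r := by
  exact berman_aux n hn m r hm hr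
end

section
/- For all integers n ≥ 2, m ≥ 1 and 0 ≤ r ≤ m−1, the set B = {c_m(i') : i' ∈ {0,…,n−1}^m, wt(i') ≥ r+1} is an F_2-basis of the Berman code D_n(r,m). -/
open Finset

/-!
For `l : Fin n` let `extendLast l w` be the vector of length `n^(m+1)` that equals `w` on the
blocks with last coordinate `0` and `l` and vanishes elsewhere; it sends `c_m(j)` to
`c_{m+1}(j|l)`. Over `F_2` every `v = (v_0|…|v_{n-1})` splits as
`extendLast 0 (Σ_l v_l) + Σ_{l ≠ 0} extendLast l v_l`, and the pieces `Σ_l v_l` and `v_l` are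
exactly those constrained by the recursion for `D_n(r, m+1)`. Induction on `m` therefore shows
both that `c_m(i') ∈ D_n(r, m)` when `wt i' > r` and that these vectors span `D_n(r, m)`. The same
induction without the weight constraint shows that all `n^m` vectors `c_m(i')` span
`F_2^{n^m}`, so they are linearly independent.
-/

namespace Berman

variable {n m : ℕ}

lemma preceq_snoc_iff (a j : Fin m → Fin n) (b l : Fin n) :
    preceq (Fin.snoc a b) (Fin.snoc j l) ↔ preceq a j ∧ ((b : ℕ) = 0 ∨ b = l) := by
  simp only [preceq, Fin.forall_fin_succ', Fin.snoc_castSucc, Fin.snoc_last]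

lemma wtTuple_snoc (j : Fin m → Fin n) (l : Fin n) :
    wtTuple (Fin.snoc j l) = wtTuple j + if (l : ℕ) = 0 then 0 else 1 := by
  simp only [wtTuple, card_filter, Fin.sum_univ_castSucc, Fin.snoc_castSucc, Fin.snoc_last]
  split_ifs <;> simp_all

lemma wtTuple_le (i : Fin m → Fin n) : wtTuple i ≤ m :=
  (card_filter_le _ _).trans (by simp)

lemma ext_snoc {u v : (Fin (m + 1) → Fin n) → ZMod 2}
    (h : ∀ i' l, u (Fin.snoc i' l) = v (Fin.snoc i' l)) : u = v :=
  funext fun i => Fin.snocCases (motive := fun i => u i = v i) h i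

lemma sum_eq_sum_sum_subvec (v : (Fin (m + 1) → Fin n) → ZMod 2) :
    ∑ i, v i = ∑ i', ∑ l, subvec v l i' := by
  rw [← (Fin.snocEquiv fun _ => Fin n).sum_comp, Fintype.sum_prod_type, sum_comm]
  rfl

lemma zero_mem_bermanD (n m r : ℕ) : (0 : (Fin m → Fin n) → ZMod 2) ∈ BermanD n m r := by
  induction m generalizing r with
  | zero => simp [BermanD]
  | succ m ih =>
    rw [BermanD]
    split_ifs
    · simp
    · simp
    · refine ⟨fun _ => ih _, ?_⟩
      simp only [subvec, Pi.zero_apply, sum_const_zero]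
      exact ih r

lemma add_mem_bermanD {r : ℕ} {u v : (Fin m → Fin n) → ZMod 2}
    (hu : u ∈ BermanD n m r) (hv : v ∈ BermanD n m r) : u + v ∈ BermanD n m r := by
  induction m generalizing r with
  | zero => simp_all [BermanD]
  | succ m ih =>
    rw [BermanD] at hu hv ⊢
    split_ifs at hu hv ⊢
    · simp_all [sum_add_distrib]
    · simp_all
    · refine ⟨fun l => ih (hu.1 l) (hv.1 l), ?_⟩
      simp only [subvec, Pi.add_apply, sum_add_distrib]
      exact ih hu.2 hv.2

def bermanDSubmodule (n m r : ℕ) : Submodule (ZMod 2) ((Fin m → Fin n) → ZMod 2) where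
  carrier := BermanD n m r
  zero_mem' := zero_mem_bermanD n m r
  add_mem' := add_mem_bermanD
  smul_mem' c v hv := by
    rcases (show ∀ c : ZMod 2, c = 0 ∨ c = 1 by decide) c with rfl | rfl
    · simpa using zero_mem_bermanD n m r
    · simpa using hv

lemma mem_bermanD_zero_iff {v : (Fin m → Fin n) → ZMod 2} :
    v ∈ BermanD n m 0 ↔ ∑ i, v i = 0 := by
  cases m with
  | zero => simp [BermanD, funext_iff, Unique.forall_iff]
  | succ m => simp [BermanD]

-- For `r = 0` this puts the parity check defining `D_n(0, m+1)` into the shape of the recursion.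
lemma mem_bermanD_succ_iff {r : ℕ} (hr : r ≤ m) {v : (Fin (m + 1) → Fin n) → ZMod 2} :
    v ∈ BermanD n (m + 1) r ↔
      (r ≠ 0 → ∀ l, subvec v l ∈ BermanD n m (r - 1)) ∧
        (fun i' => ∑ l, subvec v l i') ∈ BermanD n m r := by
  rw [BermanD]
  split_ifs with h0 h1
  · subst h0
    simp only [Set.mem_ofPred_eq, ne_eq, not_true_eq_false, IsEmpty.forall_iff, true_and,
      mem_bermanD_zero_iff, sum_eq_sum_sum_subvec]
  · omega
  · simp [h0]

def extendLast (l : Fin n) :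
    ((Fin m → Fin n) → ZMod 2) →ₗ[ZMod 2] ((Fin (m + 1) → Fin n) → ZMod 2) where
  toFun w i := if (i (Fin.last m) : ℕ) = 0 ∨ i (Fin.last m) = l then w (Fin.init i) else 0
  map_add' u v := by ext i; simp only [Pi.add_apply]; split_ifs <;> simp
  map_smul' c v := by ext i; simp only [Pi.smul_apply]; split_ifs <;> simp

lemma extendLast_snoc (l : Fin n) (w : (Fin m → Fin n) → ZMod 2) (i' : Fin m → Fin n)
    (b : Fin n) :
    extendLast l w (Fin.snoc i' b) = if (b : ℕ) = 0 ∨ b = l then w i' else 0 := by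
  simp [extendLast]

lemma subvec_extendLast (l b : Fin n) (w : (Fin m → Fin n) → ZMod 2) :
    subvec (extendLast l w) b = if (b : ℕ) = 0 ∨ b = l then w else 0 := by
  ext i'
  rw [subvec, extendLast_snoc]
  split_ifs <;> rfl

lemma extendLast_cVec (l : Fin n) (j : Fin m → Fin n) :
    extendLast l (cVec m j) = cVec (m + 1) (Fin.snoc j l) := by
  refine ext_snoc fun i' b => ?_
  simp only [extendLast_snoc, cVec, preceq_snoc_iff]
  split_ifs <;> tauto

lemma sum_subvec_extendLast (l : Fin n) (w : (Fin m → Fin n) → ZMod 2) :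
    (fun i' => ∑ b, subvec (extendLast l w) b i') = if (l : ℕ) = 0 then w else 0 := by
  have : NeZero n := NeZero.of_pos l.pos
  have hfilter : ({b | (b : ℕ) = 0 ∨ b = l} : Finset (Fin n)) = {0, l} := by
    ext; simp [Fin.val_eq_zero_iff]
  ext i'
  simp only [subvec, extendLast_snoc, ← sum_filter, hfilter]
  by_cases hl : l = 0
  · simp [hl]
  · simp [sum_pair (Ne.symm hl), CharTwo.add_self_eq_zero, Fin.val_eq_zero_iff, hl]

lemma eq_extendLast_add_sum [NeZero n] (v : (Fin (m + 1) → Fin n) → ZMod 2) :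
    v = extendLast 0 (fun i' => ∑ l, subvec v l i') +
      ∑ l ∈ univ.erase 0, extendLast l (subvec v l) := by
  refine ext_snoc fun i' b => ?_
  simp only [Pi.add_apply, Finset.sum_apply, extendLast_snoc, Fin.val_eq_zero_iff]
  by_cases hb : b = 0
  · subst hb
    simp only [true_or, if_true]
    rw [← add_sum_erase _ _ (mem_univ 0), add_assoc, CharTwo.add_self_eq_zero, add_zero]
    rfl
  · simp [hb, subvec]

lemma extendLast_mem_bermanD {r : ℕ} (hr : r ≤ m) (l : Fin n) {w : (Fin m → Fin n) → ZMod 2}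
    (hw : r ≠ 0 → w ∈ BermanD n m (r - 1)) (hw₀ : (l : ℕ) = 0 → w ∈ BermanD n m r) :
    extendLast l w ∈ BermanD n (m + 1) r := by
  refine (mem_bermanD_succ_iff hr).2 ⟨fun hr₀ b => ?_, ?_⟩
  · rw [subvec_extendLast]
    split_ifs
    exacts [hw hr₀, zero_mem_bermanD n m _]
  · rw [sum_subvec_extendLast]
    split_ifs with hl
    exacts [hw₀ hl, zero_mem_bermanD n m r]

theorem cVec_mem_bermanD {r : ℕ} (i' : Fin m → Fin n) (h : r + 1 ≤ wtTuple i') :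
    cVec m i' ∈ BermanD n m r := by
  induction m generalizing r with
  | zero => simp [wtTuple] at h
  | succ m ih =>
    induction i' using Fin.snocCases with
    | snoc j l =>
      rw [wtTuple_snoc] at h
      have := wtTuple_le j
      rw [← extendLast_cVec]
      refine extendLast_mem_bermanD (by split_ifs at h <;> omega) l
        (fun _ => ih j (by split_ifs at h <;> omega)) (fun hl => ih j (by simpa [hl] using h))

def spanCVec (n m k : ℕ) : Submodule (ZMod 2) ((Fin m → Fin n) → ZMod 2) :=
  Submodule.span (ZMod 2) (cVec m '' {i' | k ≤ wtTuple i'})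

lemma extendLast_mem_spanCVec (l : Fin n) {a b : ℕ}
    (hab : b ≤ a + if (l : ℕ) = 0 then 0 else 1) {w : (Fin m → Fin n) → ZMod 2}
    (hw : w ∈ spanCVec n m a) : extendLast l w ∈ spanCVec n (m + 1) b := by
  have hmap := Submodule.mem_map_of_mem (f := extendLast l) hw
  rw [spanCVec, ← Submodule.span_image, Set.image_image] at hmap
  refine Submodule.span_mono ?_ hmap
  rintro _ ⟨j, hj, rfl⟩
  refine ⟨Fin.snoc j l, ?_, (extendLast_cVec l j).symm⟩
  simp only [Set.mem_ofPred_eq, wtTuple_snoc] at hj ⊢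
  omega

theorem spanCVec_zero_eq_top [NeZero n] : ∀ m, spanCVec n m 0 = ⊤
  | 0 => eq_top_iff.2 fun v _ => by
    have hv : v = v default • cVec 0 default := by
      ext i
      simp [Subsingleton.elim i default, cVec, preceq]
    rw [hv]
    exact Submodule.smul_mem _ _ (Submodule.subset_span ⟨default, Nat.zero_le _, rfl⟩)
  | m + 1 => eq_top_iff.2 fun v _ => by
    have hw (w : (Fin m → Fin n) → ZMod 2) : w ∈ spanCVec n m 0 := by
      simp [spanCVec_zero_eq_top m]
    rw [eq_extendLast_add_sum v]
    exact add_mem (extendLast_mem_spanCVec 0 (Nat.zero_le _) (hw _))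
      (sum_mem fun l _ => extendLast_mem_spanCVec l (Nat.zero_le _) (hw _))

theorem linearIndependent_cVec [NeZero n] : LinearIndependent (ZMod 2) (cVec (n := n) m) := by
  refine linearIndependent_of_top_le_span_of_card_eq_finrank ?_ (Module.finrank_pi _).symm
  simpa [spanCVec, Set.image_univ] using (spanCVec_zero_eq_top (n := n) m).ge

theorem bermanD_subset_spanCVec [NeZero n] {r : ℕ} :
    BermanD n m r ⊆ spanCVec n m (r + 1) := by
  intro v hv
  induction m generalizing r with
  | zero =>
    rw [BermanD, Set.mem_singleton_iff] at hv
    simp [hv]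
  | succ m ih =>
    by_cases hr : r ≤ m
    swap
    · rw [BermanD, if_neg (by omega), if_pos (by omega), Set.mem_singleton_iff] at hv
      simp [hv]
    obtain ⟨hsub, hfold⟩ := (mem_bermanD_succ_iff hr).1 hv
    have hsub' : ∀ l, subvec v l ∈ spanCVec n m r := fun l => by
      rcases Nat.eq_zero_or_pos r with rfl | hr₀
      · simp [spanCVec_zero_eq_top]
      · simpa [Nat.sub_add_cancel hr₀] using ih (hsub hr₀.ne' l)
    rw [eq_extendLast_add_sum v]
    refine add_mem (extendLast_mem_spanCVec 0 (by simp) (ih hfold))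
      (sum_mem fun l hl => extendLast_mem_spanCVec l ?_ (hsub' l))
    simp [(Fin.val_eq_zero_iff).not.2 (mem_erase.1 hl).1]

end Berman

theorem berman_basis_D_general (n m r : ℕ) (hn : 2 ≤ n) :
    LinearIndependent (ZMod 2)
      (fun i' : {i' : Fin m → Fin n // r + 1 ≤ wtTuple i'} => cVec (n := n) m i'.1) ∧
    (↑(Submodule.span (ZMod 2)
        (cVec (n := n) m '' {i' : Fin m → Fin n | r + 1 ≤ wtTuple i'})) :
      Set ((Fin m → Fin n) → ZMod 2)) = BermanD n m r := by
  have : NeZero n := ⟨by omega⟩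
  refine ⟨Berman.linearIndependent_cVec.comp _ Subtype.val_injective, ?_⟩
  refine subset_antisymm ?_ Berman.bermanD_subset_spanCVec
  change Berman.spanCVec n m (r + 1) ≤ Berman.bermanDSubmodule n m r
  exact Submodule.span_le.2 fun _ ⟨i', hi', hv⟩ => hv ▸ Berman.cVec_mem_bermanD i' hi'

/-- `{c_m(i') : wt(i') ≥ r+1}` is an `F_2`-basis of `D_n(r,m)`. -/
theorem berman_basis_D (n m r : ℕ) (hn : 2 ≤ n) (hm : 1 ≤ m) (hr : r ≤ m - 1) :
    LinearIndependent (ZMod 2)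
      (fun i' : {i' : Fin m → Fin n // r + 1 ≤ wtTuple i'} => cVec (n := n) m i'.1) ∧
    (↑(Submodule.span (ZMod 2)
        (cVec (n := n) m '' {i' : Fin m → Fin n | r + 1 ≤ wtTuple i'})) :
      Set ((Fin m → Fin n) → ZMod 2)) = BermanD n m r :=
  berman_basis_D_general n m r hn
end

section
/- For all integers n ≥ 2, m ≥ 1 and 0 ≤ r ≤ m, the set B = {d_m(i') : i' ∈ {0,…,n−1}^m, wt(i') ≤ r} is an F_2-basis of the dual Berman code C_n(r,m). -/
/-!
Write a tuple of length `m + 1` as `(j', a)` with `a` its last coordinate. Then the `l`-th block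
of `d_{m+1}(j', a)` is `d_m(j')` if `a = 0` or `a = l`, and `0` otherwise. Consequently the span
of `{d_{m+1}(i') : wt(i') ≤ r + 1}` is exactly the construction `(u + u_0 | … | u + u_{n-2} | u)`
applied to the spans for `(r + 1, m)` and `(r, m)`: the blocks at `a ≠ 0` reach all of the second
span, and the block at `a = 0` is `d_{m+1}(j', 0)` minus the others. This is the recursion
defining `C_n(r,m)`, so induction on `m` identifies span and code. For `r = m` the span is the
whole space of dimension `n^m`, which is spanned by the `n^m` vectors `d_m(i')`; hence they are
linearly independent.
-/

open Finset

section

variable {n : ℕ}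

lemma preceq_snoc_iff {m : ℕ} (j' i' : Fin m → Fin n) (a l : Fin n) :
    preceq (Fin.snoc j' a : Fin (m + 1) → Fin n) (Fin.snoc i' l) ↔
      preceq j' i' ∧ ((a : ℕ) = 0 ∨ a = l) := by
  simp only [preceq, Fin.forall_fin_succ', Fin.snoc_castSucc, Fin.snoc_last]

lemma wtTuple_snoc {m : ℕ} (j' : Fin m → Fin n) (a : Fin n) :
    wtTuple (Fin.snoc j' a : Fin (m + 1) → Fin n) =
      wtTuple j' + if (a : ℕ) = 0 then 0 else 1 := by
  simp only [wtTuple, Finset.card_filter, Fin.sum_univ_castSucc, Fin.snoc_castSucc,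
    Fin.snoc_last, ite_not]

lemma subvec_dVec_snoc {m : ℕ} (j' : Fin m → Fin n) (a l : Fin n) :
    subvec (dVec (m + 1) (Fin.snoc j' a)) l = if (a : ℕ) = 0 ∨ a = l then dVec m j' else 0 := by
  funext i
  by_cases h : (a : ℕ) = 0 ∨ a = l <;> simp [subvec, dVec, preceq_snoc_iff, h]

def blockEmbed (m : ℕ) (a : Fin n) :
    ((Fin m → Fin n) → ZMod 2) →ₗ[ZMod 2] ((Fin (m + 1) → Fin n) → ZMod 2) where
  toFun u i := if i (Fin.last m) = a then u (Fin.init i) else 0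
  map_add' u v := by funext i; split_ifs <;> simp [*]
  map_smul' c u := by funext i; split_ifs <;> simp [*]

lemma sum_blockEmbed_subvec {m : ℕ} (v : (Fin (m + 1) → Fin n) → ZMod 2) :
    ∑ a, blockEmbed m a (subvec v a) = v := by
  funext i
  simp [blockEmbed, Finset.sum_apply, subvec, Fin.snoc_init_self]

lemma dVec_snoc_of_ne_zero {m : ℕ} (j' : Fin m → Fin n) {a : Fin n} (ha : (a : ℕ) ≠ 0) :
    dVec (m + 1) (Fin.snoc j' a) = blockEmbed m a (dVec m j') := by
  conv_lhs => rw [← sum_blockEmbed_subvec (dVec (m + 1) (Fin.snoc j' a))]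
  simp [subvec_dVec_snoc, ha, apply_ite]

lemma dVec_snoc_of_eq_zero {m : ℕ} (j' : Fin m → Fin n) {a : Fin n} (ha : (a : ℕ) = 0) :
    dVec (m + 1) (Fin.snoc j' a) = ∑ b, blockEmbed m b (dVec m j') := by
  conv_lhs => rw [← sum_blockEmbed_subvec (dVec (m + 1) (Fin.snoc j' a))]
  simp [subvec_dVec_snoc, ha]

def dSpan (n m r : ℕ) : Submodule (ZMod 2) ((Fin m → Fin n) → ZMod 2) :=
  Submodule.span (ZMod 2) (dVec m '' {i' | wtTuple i' ≤ r})

lemma dVec_mem_dSpan {m r : ℕ} {j : Fin m → Fin n} (hj : wtTuple j ≤ r) :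
    dVec m j ∈ dSpan n m r :=
  Submodule.subset_span ⟨j, hj, rfl⟩

lemma dSpan_mono {m r s : ℕ} (h : r ≤ s) : dSpan n m r ≤ dSpan n m s :=
  Submodule.span_mono (Set.image_mono fun _ hj => le_trans hj h)

lemma blockEmbed_mem_dSpan {m s : ℕ} (a : Fin n) {u : (Fin m → Fin n) → ZMod 2}
    (hu : u ∈ dSpan n m s) : blockEmbed m a u ∈ dSpan n (m + 1) (s + 1) := by
  suffices (dSpan n m s).map (blockEmbed m a) ≤ dSpan n (m + 1) (s + 1) from this ⟨u, hu, rfl⟩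
  rw [dSpan, Submodule.map_span_le]
  rintro _ ⟨j', (hj' : wtTuple j' ≤ s), rfl⟩
  have hsnoc (b : Fin n) : dVec (m + 1) (Fin.snoc j' b) ∈ dSpan n (m + 1) (s + 1) :=
    dVec_mem_dSpan (by rw [wtTuple_snoc]; split_ifs <;> omega)
  by_cases ha : (a : ℕ) = 0
  · -- the block at `a = 0` is `d_{m+1}(j', 0)` minus the blocks at all `b ≠ 0`
    have hsplit := dVec_snoc_of_eq_zero j' ha
    rw [← Finset.add_sum_erase _ _ (Finset.mem_univ a)] at hsplit
    rw [eq_sub_of_add_eq hsplit.symm]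
    refine sub_mem (hsnoc a) (Submodule.sum_mem _ fun b hb => ?_)
    have hb0 : (b : ℕ) ≠ 0 := fun hb0 => Finset.ne_of_mem_erase hb (Fin.ext (hb0.trans ha.symm))
    rw [← dVec_snoc_of_ne_zero j' hb0]
    exact hsnoc b
  · rw [← dVec_snoc_of_ne_zero j' ha]
    exact hsnoc a

lemma sum_blockEmbed_mem_dSpan [NeZero n] {m s : ℕ} {u : (Fin m → Fin n) → ZMod 2}
    (hu : u ∈ dSpan n m s) : ∑ a, blockEmbed m a u ∈ dSpan n (m + 1) s := by
  suffices (dSpan n m s).map (∑ a, blockEmbed m a) ≤ dSpan n (m + 1) s by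
    simpa using this ⟨u, hu, rfl⟩
  rw [dSpan, Submodule.map_span_le]
  rintro _ ⟨j', hj', rfl⟩
  rw [LinearMap.sum_apply, ← dVec_snoc_of_eq_zero j' (a := 0) rfl]
  exact dVec_mem_dSpan (by simpa [wtTuple_snoc] using hj')

lemma dSpan_eq_top_of_le [NeZero n] {m r : ℕ} (h : m ≤ r) : dSpan n m r = ⊤ := by
  induction m generalizing r with
  | zero =>
    refine Submodule.eq_top_iff'.2 fun v => ?_
    have hv : v = v Fin.elim0 • dVec (n := n) 0 Fin.elim0 := funext fun i => by
      simp [dVec, preceq, Subsingleton.elim i Fin.elim0]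
    rw [hv]
    exact Submodule.smul_mem _ _ (dVec_mem_dSpan (by simp [wtTuple]))
  | succ m ih =>
    obtain ⟨s, rfl⟩ : ∃ s, r = s + 1 := ⟨r - 1, by omega⟩
    refine Submodule.eq_top_iff'.2 fun v => ?_
    rw [← sum_blockEmbed_subvec v]
    exact Submodule.sum_mem _ fun a _ =>
      blockEmbed_mem_dSpan a ((ih (r := s) (by omega)).symm ▸ Submodule.mem_top)

lemma dSpan_zero [NeZero n] (m : ℕ) : dSpan n m 0 = Submodule.span (ZMod 2) {1} := by
  have hzero : {i' : Fin m → Fin n | wtTuple i' ≤ 0} = {0} := by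
    ext j
    simp [wtTuple, Finset.filter_eq_empty_iff, funext_iff, Fin.val_eq_zero_iff]
  have hone : dVec m (0 : Fin m → Fin n) = 1 := funext fun i => by simp [dVec, preceq]
  rw [dSpan, hzero, Set.image_singleton, hone]

/-- The construction `(u + u_0 | … | u + u_{n-2} | u)` with `u ∈ P` and `u_l ∈ Q`; here `w l`
stands for `u_l`, padded by `w (n-1) = 0`. -/
def bermanStep {m : ℕ} (P Q : Submodule (ZMod 2) ((Fin m → Fin n) → ZMod 2)) :
    Submodule (ZMod 2) ((Fin (m + 1) → Fin n) → ZMod 2) where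
  carrier := {v | ∃ (u : (Fin m → Fin n) → ZMod 2)
    (w : Fin n → (Fin m → Fin n) → ZMod 2), u ∈ P ∧
    (∀ l : Fin n, (l : ℕ) < n - 1 → w l ∈ Q) ∧ (∀ l : Fin n, (l : ℕ) = n - 1 → w l = 0) ∧
    (∀ l : Fin n, subvec v l = u + w l)}
  add_mem' := by
    rintro x y ⟨u, w, hu, hw, hw0, hx⟩ ⟨u', w', hu', hw', hw0', hy⟩
    refine ⟨u + u', w + w', add_mem hu hu', fun l hl => add_mem (hw l hl) (hw' l hl),
      fun l hl => by simp [hw0 l hl, hw0' l hl], fun l => ?_⟩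
    change subvec x l + subvec y l = _
    rw [hx, hy, Pi.add_apply]
    abel
  zero_mem' :=
    ⟨0, 0, zero_mem _, fun _ _ => zero_mem _, fun _ _ => rfl, fun _ => (add_zero 0).symm⟩
  smul_mem' c x := by
    rintro ⟨u, w, hu, hw, hw0, hx⟩
    refine ⟨c • u, c • w, Submodule.smul_mem _ c hu,
      fun l hl => Submodule.smul_mem _ c (hw l hl), fun l hl => by simp [hw0 l hl], fun l => ?_⟩
    change c • subvec x l = _
    rw [hx, smul_add, Pi.smul_apply]

lemma dVec_mem_bermanStep {m r : ℕ} {j : Fin (m + 1) → Fin n} (hj : wtTuple j ≤ r + 1) :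
    dVec (m + 1) j ∈ bermanStep (dSpan n m (r + 1)) (dSpan n m r) := by
  obtain ⟨j', a, rfl⟩ : ∃ j' a, j = Fin.snoc j' a :=
    ⟨Fin.init j, j (Fin.last m), (Fin.snoc_init_self j).symm⟩
  rw [wtTuple_snoc] at hj
  by_cases ha : (a : ℕ) = 0
  · refine ⟨dVec m j', 0, dVec_mem_dSpan (by simpa [ha] using hj), fun _ _ => zero_mem _,
      fun _ _ => rfl, fun l => ?_⟩
    simp [subvec_dVec_snoc, ha]
  · -- only block `a` is nonzero: take `u` to be block `n - 1` and `u_l` the difference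
    have hd : dVec m j' ∈ dSpan n m r := dVec_mem_dSpan (by simpa [ha] using hj)
    have hite (p : Prop) [Decidable p] : (if p then dVec m j' else 0) ∈ dSpan n m r := by
      split_ifs
      exacts [hd, zero_mem _]
    refine ⟨if (a : ℕ) = n - 1 then dVec m j' else 0,
      fun l => (if l = a then dVec m j' else 0) - if (a : ℕ) = n - 1 then dVec m j' else 0,
      dSpan_mono (r := r) (by omega) (hite _), fun l _ => sub_mem (hite _) (hite _),
      fun l hl => ?_, fun l => ?_⟩
    · by_cases hla : l = a
      · simp [hla, ← hl]
      · simp [hla, show (a : ℕ) ≠ n - 1 from fun h => hla (Fin.ext (hl.trans h.symm))]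
    · simp [subvec_dVec_snoc, ha, eq_comm]

lemma dSpan_succ_succ [NeZero n] (m r : ℕ) :
    dSpan n (m + 1) (r + 1) = bermanStep (dSpan n m (r + 1)) (dSpan n m r) := by
  refine le_antisymm (Submodule.span_le.2 ?_) ?_
  · rintro _ ⟨j, hj, rfl⟩
    exact dVec_mem_bermanStep hj
  · rintro v ⟨u, w, hu, hw, hw0, hv⟩
    have hsplit : v = ∑ a, blockEmbed m a u + ∑ a, blockEmbed m a (w a) := by
      rw [← Finset.sum_add_distrib]
      conv_lhs => rw [← sum_blockEmbed_subvec v]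
      simp [hv]
    rw [hsplit]
    refine add_mem (sum_blockEmbed_mem_dSpan hu) (Submodule.sum_mem _ fun a _ => ?_)
    by_cases ha : (a : ℕ) < n - 1
    · exact blockEmbed_mem_dSpan a (hw a ha)
    · rw [hw0 a (by omega), map_zero]
      exact zero_mem _

end

lemma bermanC_of_le {n m r : ℕ} (h : m ≤ r) : BermanC n m r = Set.univ := by
  cases m with
  | zero => rfl
  | succ m => simp [BermanC, h, show r ≠ 0 by omega]

lemma coe_dSpan_eq_bermanC {n : ℕ} [NeZero n] (m r : ℕ) :
    (dSpan n m r : Set _) = BermanC n m r := by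
  induction m generalizing r with
  | zero => rw [dSpan_eq_top_of_le r.zero_le, bermanC_of_le r.zero_le, Submodule.top_coe]
  | succ m ih =>
    rcases r with _ | r
    · ext v
      simp [dSpan_zero, BermanC, Submodule.mem_span_singleton, funext_iff, eq_comm]
    · by_cases hrm : m + 1 ≤ r + 1
      · rw [dSpan_eq_top_of_le hrm, bermanC_of_le hrm, Submodule.top_coe]
      · rw [dSpan_succ_succ, BermanC, if_neg r.succ_ne_zero, if_neg hrm, Nat.add_sub_cancel,
          ← ih, ← ih]
        rfl

lemma linearIndependent_dVec {n : ℕ} [NeZero n] (m : ℕ) :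
    LinearIndependent (ZMod 2) (dVec (n := n) m) := by
  refine linearIndependent_of_top_le_span_of_card_eq_finrank ?_ (Module.finrank_pi _).symm
  rw [← dSpan_eq_top_of_le (le_refl m)]
  exact Submodule.span_mono (Set.image_subset_range _ _)

theorem berman_basis_C_general (n m r : ℕ) (hn : 2 ≤ n) :
    LinearIndependent (ZMod 2)
      (fun i' : {i' : Fin m → Fin n // wtTuple i' ≤ r} => dVec (n := n) m i'.1) ∧
    (↑(Submodule.span (ZMod 2)
        (dVec (n := n) m '' {i' : Fin m → Fin n | wtTuple i' ≤ r})) :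
      Set ((Fin m → Fin n) → ZMod 2)) = BermanC n m r := by
  have : NeZero n := ⟨by omega⟩
  exact ⟨(linearIndependent_dVec m).comp Subtype.val Subtype.val_injective,
    coe_dSpan_eq_bermanC m r⟩

/-- `{d_m(i') : wt(i') ≤ r}` is an `F_2`-basis of `C_n(r,m)`. -/
theorem berman_basis_C (n m r : ℕ) (hn : 2 ≤ n) (hm : 1 ≤ m) (hr : r ≤ m) :
    LinearIndependent (ZMod 2)
      (fun i' : {i' : Fin m → Fin n // wtTuple i' ≤ r} => dVec (n := n) m i'.1) ∧
    (↑(Submodule.span (ZMod 2)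
        (dVec (n := n) m '' {i' : Fin m → Fin n | wtTuple i' ≤ r})) :
      Set ((Fin m → Fin n) → ZMod 2)) = BermanC n m r :=
  berman_basis_C_general n m r hn
end

section
/- Let n ≥ 2, m ≥ 1, 0 ≤ r ≤ m, and let σ be any permutation of {0,…,n−1}. The permutation π of {0,…,n−1}^m defined by π(i_0,…,i_{m−2},i_{m−1}) = (i_0,…,i_{m−2},σ(i_{m−1})) is an automorphism of the Berman code D_n(r,m): for every v ∈ D_n(r,m), the vector v' with coordinates v'_i = v_{π(i)} also lies in D_n(r,m). -/
open Finset

/-- applying a permutation `σ` of `{0,…,n−1}` to the last component of the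
index tuple is an automorphism of `D_n(r,m)`. -/
theorem berman_auto_last (n m r : ℕ) (hn : 2 ≤ n) (hm : 1 ≤ m) (hr : r ≤ m)
    (σ : Equiv.Perm (Fin n)) :
    ∀ v ∈ BermanD n m r,
      (fun i : Fin m → Fin n =>
          v (Function.update i ⟨m - 1, by omega⟩ (σ (i ⟨m - 1, by omega⟩)))) ∈
        BermanD n m r := by
  intro v hv
  obtain ⟨m, rfl⟩ : ∃ m', m = m' + 1 := ⟨m - 1, by omega⟩
  have hlast : (⟨m + 1 - 1, by omega⟩ : Fin (m + 1)) = Fin.last m := rfl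
  simp only [hlast]
  have key : ∀ l : Fin n,
      subvec (fun i : Fin (m+1) → Fin n =>
        v (Function.update i (Fin.last m) (σ (i (Fin.last m))))) l
      = subvec v (σ l) := by
    intro l
    funext i'
    simp [subvec, Fin.snoc_last, Fin.update_snoc_last]
  rw [BermanD] at hv ⊢
  by_cases h0 : r = 0
  · subst h0
    simp only [if_pos rfl, if_true, Set.mem_setOf_eq] at hv ⊢
    have hs := Equiv.sum_comp
      (Equiv.piCongrRight (fun k : Fin (m+1) =>
        if k = Fin.last m then σ else Equiv.refl (Fin n))) v
    rw [← hs] at hv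
    rw [← hv]
    apply Finset.sum_congr rfl
    intro i _
    congr 1
    funext k
    by_cases hk : k = Fin.last m
    · subst hk; simp [Function.update_self]
    · simp [Function.update_of_ne hk, hk]
  · by_cases hge : m + 1 ≤ r
    · simp only [if_neg h0, if_pos hge, Set.mem_singleton_iff] at hv ⊢
      subst hv
      funext i
      simp
    · simp only [if_neg h0, if_neg hge, Set.mem_setOf_eq] at hv ⊢
      obtain ⟨h1, h2⟩ := hv
      refine ⟨fun l => by rw [key]; exact h1 (σ l), ?_⟩
      simp only [key]
      have hs : (fun i' => ∑ l, subvec v (σ l) i') = fun i' => ∑ l, subvec v l i' := by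
        funext i'
        exact Equiv.sum_comp σ (fun l => subvec v l i')
      rw [hs]
      exact h2
end

section
/- Let n ≥ 2, m ≥ 1 and 0 ≤ r ≤ m. For any permutations σ_0,…,σ_{m−1} of {0,…,n−1} and any permutation γ of {0,…,m−1}, both of the following permutations of {0,…,n−1}^m are automorphisms of D_n(r,m) and of C_n(r,m): (i_0,…,i_{m−1}) ↦ (σ_0(i_0),…,σ_{m−1}(i_{m−1})), and (i_0,…,i_{m−1}) ↦ (i_{γ(0)},…,i_{γ(m−1)}). -/
open Finset

/-!
A subcube of `{0,…,n−1}^m` fixes some of the coordinates; its codimension is the number of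
fixed ones. If the last coordinate of a subcube is free, all subvectors of its indicator are the
indicator of a subcube of the same codimension; if it is fixed to `a`, the subvector at `a` is
the indicator of a subcube of one codimension less and the others vanish. With this, induction
along the recursions shows that `C_n(r,m)` is spanned by the indicators of the subcubes of
codimension at most `r`, and that `D_n(r,m)` consists of the vectors orthogonal to all of them.
Both kinds of permutations map subcubes to subcubes of the same codimension.
-/

open Matrix Submodule

theorem Submodule.apply_mem_span_of_forall {R M N : Type*} [Semiring R] [AddCommMonoid M]
    [AddCommMonoid N] [Module R M] [Module R N] (f : M →ₗ[R] N) {s : Set M} {t : Set N}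
    (h : ∀ x ∈ s, f x ∈ t) {x : M} (hx : x ∈ span R s) : f x ∈ span R t :=
  span_mono (Set.image_subset_iff.mpr h) (apply_mem_span_image_of_mem_span f hx)

namespace Berman

variable {n m : ℕ}

/-- A pattern `c : Fin m → Option (Fin n)` fixes coordinate `k` to `a` when `c k = some a` and
leaves it free when `c k = none`; `cubeInd c` is the indicator of the subcube it describes. -/
def cubeInd (c : Fin m → Option (Fin n)) : (Fin m → Fin n) → ZMod 2 :=
  fun j => if ∀ k, ∀ a ∈ c k, j k = a then 1 else 0

def codim (c : Fin m → Option (Fin n)) : ℕ :=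
  #{k | (c k).isSome}

def cubeIndicators (n m r : ℕ) : Set ((Fin m → Fin n) → ZMod 2) :=
  cubeInd '' {c | codim c ≤ r}

@[simp]
theorem codim_snoc_none (c : Fin m → Option (Fin n)) :
    codim (Fin.snoc c none : Fin (m + 1) → Option (Fin n)) = codim c := by
  simp only [codim, Finset.card_filter, Fin.sum_univ_castSucc, Fin.snoc_castSucc, Fin.snoc_last]
  simp

@[simp]
theorem codim_snoc_some (c : Fin m → Option (Fin n)) (a : Fin n) :
    codim (Fin.snoc c (some a) : Fin (m + 1) → Option (Fin n)) = codim c + 1 := by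
  simp only [codim, Finset.card_filter, Fin.sum_univ_castSucc, Fin.snoc_castSucc, Fin.snoc_last]
  simp

theorem codim_eq_zero_iff {c : Fin m → Option (Fin n)} : codim c = 0 ↔ c = fun _ => none := by
  simp [codim, funext_iff]

@[simp]
theorem codim_some (i : Fin m → Fin n) : codim (fun k => some (i k)) = m := by
  simp [codim]

@[simp]
theorem cubeInd_none : cubeInd (fun _ : Fin m => (none : Option (Fin n))) = 1 := by
  funext j; simp [cubeInd]

theorem cubeInd_some (i : Fin m → Fin n) : cubeInd (fun k => some (i k)) = Pi.single i 1 := by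
  funext j; simp [cubeInd, Pi.single_apply, funext_iff]

theorem subvec_cubeInd_snoc_none (c : Fin m → Option (Fin n)) :
    subvec (cubeInd (Fin.snoc c none)) = fun _ => cubeInd c := by
  funext l j
  simp [subvec, cubeInd, Fin.forall_fin_succ', Fin.snoc_castSucc]

theorem subvec_cubeInd_snoc_some (c : Fin m → Option (Fin n)) (a : Fin n) :
    subvec (cubeInd (Fin.snoc c (some a))) = Pi.single a (cubeInd c) := by
  funext l j
  by_cases hl : l = a
  · subst hl; simp [subvec, cubeInd, Fin.forall_fin_succ']
  · simp [subvec, cubeInd, Fin.forall_fin_succ', hl]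

def ofSubvecs : (Fin n → (Fin m → Fin n) → ZMod 2) →ₗ[ZMod 2] (Fin (m + 1) → Fin n) → ZMod 2 where
  toFun f j := f (j (Fin.last m)) (Fin.init j)
  map_add' _ _ := rfl
  map_smul' _ _ := rfl

@[simp]
theorem ofSubvecs_subvec (v : (Fin (m + 1) → Fin n) → ZMod 2) : ofSubvecs (subvec v) = v := by
  funext j
  simp [ofSubvecs, subvec, Fin.snoc_init_self]

theorem dotProduct_eq_sum_subvec (v w : (Fin (m + 1) → Fin n) → ZMod 2) :
    v ⬝ᵥ w = ∑ l, subvec v l ⬝ᵥ subvec w l := by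
  simp only [dotProduct, subvec]
  rw [← (Fin.snocEquiv fun _ => Fin n).sum_comp, Fintype.sum_prod_type]
  rfl

theorem cubeInd_snoc_none_dotProduct (c : Fin m → Option (Fin n))
    (v : (Fin (m + 1) → Fin n) → ZMod 2) :
    cubeInd (Fin.snoc c none) ⬝ᵥ v = cubeInd c ⬝ᵥ ∑ l, subvec v l := by
  simp [dotProduct_eq_sum_subvec, subvec_cubeInd_snoc_none, dotProduct_sum]

theorem cubeInd_snoc_some_dotProduct (c : Fin m → Option (Fin n)) (a : Fin n)
    (v : (Fin (m + 1) → Fin n) → ZMod 2) :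
    cubeInd (Fin.snoc c (some a)) ⬝ᵥ v = cubeInd c ⬝ᵥ subvec v a := by
  rw [dotProduct_eq_sum_subvec, subvec_cubeInd_snoc_some, Finset.sum_eq_single a] <;>
    simp_all

theorem forall_mem_cubeIndicators_succ {r : ℕ} {P : ((Fin (m + 1) → Fin n) → ZMod 2) → Prop} :
    (∀ g ∈ cubeIndicators n (m + 1) r, P g) ↔
      (∀ c, codim c ≤ r → P (cubeInd (Fin.snoc c none))) ∧
        ∀ c a, codim c + 1 ≤ r → P (cubeInd (Fin.snoc c (some a))) := by
  simp only [cubeIndicators, Set.forall_mem_image, Set.mem_ofPred_eq]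
  refine ⟨fun h => ⟨fun c hc => h (by simpa), fun c a hc => h (by simpa)⟩, fun h c hc => ?_⟩
  rw [← Fin.snoc_init_self c] at hc ⊢
  cases hlast : c (Fin.last m) with
  | none => simp only [hlast, codim_snoc_none] at hc ⊢; exact h.1 _ hc
  | some a => simp only [hlast, codim_snoc_some] at hc ⊢; exact h.2 _ _ hc

theorem cubeIndicators_zero : cubeIndicators n m 0 = {1} := by
  ext g
  simp [cubeIndicators, codim_eq_zero_iff]

theorem single_one_mem_cubeIndicators {r : ℕ} (h : m ≤ r) (i : Fin m → Fin n) :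
    Pi.single i 1 ∈ cubeIndicators n m r :=
  ⟨fun k => some (i k), by simpa using h, cubeInd_some i⟩

theorem orthogonal_cubeIndicators_of_le {r : ℕ} (h : m ≤ r) :
    {v | ∀ g ∈ cubeIndicators n m r, g ⬝ᵥ v = 0} = {0} := by
  ext v
  refine ⟨fun hv => funext fun i => ?_, fun hv g _ => by simp [Set.mem_singleton_iff.mp hv]⟩
  simpa using hv _ (single_one_mem_cubeIndicators h i)

theorem bermanD_eq (n : ℕ) :
    ∀ m r, BermanD n m r = {v | ∀ g ∈ cubeIndicators n m r, g ⬝ᵥ v = 0}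
  | 0, r => by rw [orthogonal_cubeIndicators_of_le (Nat.zero_le r)]; rfl
  | m + 1, r => by
    rcases Nat.eq_zero_or_pos r with rfl | hr
    · ext v
      simp [BermanD, cubeIndicators_zero, one_dotProduct]
    by_cases hmr : m + 1 ≤ r
    · rw [orthogonal_cubeIndicators_of_le hmr]
      simp [BermanD, hr.ne', hmr]
    ext v
    simp only [BermanD, if_neg hr.ne', if_neg hmr, bermanD_eq n m, Set.mem_ofPred_eq,
      forall_mem_cubeIndicators_succ, cubeInd_snoc_none_dotProduct, cubeInd_snoc_some_dotProduct]
    simp only [cubeIndicators, Set.forall_mem_image, Set.mem_ofPred_eq, ← Finset.sum_fn,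
      Nat.le_sub_iff_add_le hr]
    rw [and_comm, forall_comm]

/-- The recursive step of `BermanC`, for arbitrary subspaces in place of `C_n(r,m)` and
`C_n(r-1,m)`. -/
def cStep (U W : Submodule (ZMod 2) ((Fin m → Fin n) → ZMod 2)) :
    Submodule (ZMod 2) ((Fin (m + 1) → Fin n) → ZMod 2) where
  carrier := {v | ∃ (u : (Fin m → Fin n) → ZMod 2) (w : Fin n → (Fin m → Fin n) → ZMod 2),
    u ∈ U ∧ (∀ l : Fin n, (l : ℕ) < n - 1 → w l ∈ W) ∧ (∀ l : Fin n, (l : ℕ) = n - 1 → w l = 0) ∧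
      (∀ l : Fin n, subvec v l = u + w l)}
  zero_mem' :=
    ⟨0, 0, U.zero_mem, fun _ _ => W.zero_mem, fun _ _ => rfl, fun _ => (add_zero _).symm⟩
  add_mem' := by
    rintro v v' ⟨u, w, hu, hw, hw₀, hv⟩ ⟨u', w', hu', hw', hw₀', hv'⟩
    refine ⟨u + u', w + w', U.add_mem hu hu', fun l hl => W.add_mem (hw l hl) (hw' l hl),
      fun l hl => by simp [hw₀ l hl, hw₀' l hl], fun l => ?_⟩
    change subvec v l + subvec v' l = _
    rw [hv, hv', Pi.add_apply]
    abel
  smul_mem' := by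
    rintro a v ⟨u, w, hu, hw, hw₀, hv⟩
    refine ⟨a • u, a • w, U.smul_mem a hu, fun l hl => W.smul_mem a (hw l hl),
      fun l hl => by simp [hw₀ l hl], fun l => ?_⟩
    change a • subvec v l = _
    rw [hv, Pi.smul_apply, smul_add]

theorem cubeIndicators_mono {r r' : ℕ} (h : r ≤ r') :
    cubeIndicators n m r ⊆ cubeIndicators n m r' :=
  Set.image_mono fun _ hc => le_trans hc h

theorem ofSubvecs_const_cubeInd (c : Fin m → Option (Fin n)) :
    ofSubvecs (fun _ => cubeInd c) = cubeInd (Fin.snoc c none) := by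
  rw [← subvec_cubeInd_snoc_none, ofSubvecs_subvec]

theorem ofSubvecs_single_cubeInd (c : Fin m → Option (Fin n)) (a : Fin n) :
    ofSubvecs (Pi.single a (cubeInd c)) = cubeInd (Fin.snoc c (some a)) := by
  rw [← subvec_cubeInd_snoc_some, ofSubvecs_subvec]

theorem cubeIndicators_subset_cStep {r : ℕ} (hr : 0 < r) :
    cubeIndicators n (m + 1) r ⊆
      cStep (span (ZMod 2) (cubeIndicators n m r))
        (span (ZMod 2) (cubeIndicators n m (r - 1))) := by
  rw [Set.subset_def, forall_mem_cubeIndicators_succ]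
  refine ⟨fun c hc => ?_, fun c a hc => ?_⟩
  · exact ⟨cubeInd c, 0, subset_span ⟨c, hc, rfl⟩, fun _ _ => zero_mem _, fun _ _ => rfl,
      fun l => by simp [subvec_cubeInd_snoc_none]⟩
  have hc' : cubeInd c ∈ span (ZMod 2) (cubeIndicators n m (r - 1)) :=
    subset_span ⟨c, by simp only [Set.mem_ofPred_eq]; omega, rfl⟩
  by_cases ha : (a : ℕ) = n - 1
  · refine ⟨cubeInd c, fun l => if (l : ℕ) = n - 1 then 0 else cubeInd c,
      span_mono (cubeIndicators_mono (Nat.sub_le r 1)) hc', fun l hl => by simp [hl.ne, hc'],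
      fun l hl => by simp [hl], fun l => ?_⟩
    by_cases hl : l = a
    · subst hl
      simp [subvec_cubeInd_snoc_some, ha]
    · have hl' : (l : ℕ) ≠ n - 1 := fun h => hl (Fin.ext (h.trans ha.symm))
      simp [subvec_cubeInd_snoc_some, hl, hl', ZModModule.add_self]
  · refine ⟨0, Pi.single a (cubeInd c), zero_mem _, fun l _ => ?_, fun l hl => ?_,
      fun l => by simp [subvec_cubeInd_snoc_some]⟩
    · by_cases hl : l = a
      · subst hl
        simpa using hc'
      · simp [hl]
    · have hl' : l ≠ a := fun h => ha (h ▸ hl)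
      simp [hl']

theorem cStep_span_cubeIndicators {r : ℕ} (hr : 0 < r) :
    cStep (span (ZMod 2) (cubeIndicators n m r)) (span (ZMod 2) (cubeIndicators n m (r - 1))) =
      span (ZMod 2) (cubeIndicators n (m + 1) r) := by
  refine le_antisymm ?_ (span_le.mpr (cubeIndicators_subset_cStep hr))
  rintro v ⟨u, w, hu, hw, hw₀, hv⟩
  have hsubvec : subvec v = (fun _ => u) + ∑ l, Pi.single l (w l) := by
    rw [LinearMap.sum_single_apply]
    exact funext hv
  rw [← ofSubvecs_subvec v, hsubvec, map_add, map_sum]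
  refine add_mem ?_ (sum_mem fun l _ => ?_)
  · refine apply_mem_span_of_forall (ofSubvecs ∘ₗ LinearMap.pi fun _ => LinearMap.id) ?_ hu
    rintro _ ⟨c, hc, rfl⟩
    exact ⟨Fin.snoc c none, by simpa using hc, (ofSubvecs_const_cubeInd c).symm⟩
  rcases Nat.lt_or_ge l (n - 1) with hl | hl
  · refine apply_mem_span_of_forall (ofSubvecs ∘ₗ LinearMap.single _ _ l) ?_ (hw l hl)
    rintro _ ⟨c, hc, rfl⟩
    exact ⟨Fin.snoc c (some l), by simp only [Set.mem_ofPred_eq] at hc ⊢; simp; omega,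
      (ofSubvecs_single_cubeInd c l).symm⟩
  · rw [hw₀ l (by omega), Pi.single_zero, map_zero]
    exact zero_mem _

theorem span_cubeIndicators_of_le {r : ℕ} (h : m ≤ r) :
    span (ZMod 2) (cubeIndicators n m r) = ⊤ := by
  refine eq_top_iff.mpr ((Pi.basisFun (ZMod 2) _).span_eq.symm.le.trans (span_mono ?_))
  rintro _ ⟨i, rfl⟩
  rw [Pi.basisFun_apply]
  exact single_one_mem_cubeIndicators h i

theorem bermanC_eq_span (n : ℕ) :
    ∀ m r, BermanC n m r = span (ZMod 2) (cubeIndicators n m r)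
  | 0, r => by rw [span_cubeIndicators_of_le (Nat.zero_le r)]; rfl
  | m + 1, r => by
    rcases Nat.eq_zero_or_pos r with rfl | hr
    · ext v
      simp [BermanC, cubeIndicators_zero, mem_span_singleton, funext_iff, eq_comm]
    by_cases hmr : m + 1 ≤ r
    · rw [span_cubeIndicators_of_le hmr]
      simp [BermanC, hr.ne', hmr]
    rw [← cStep_span_cubeIndicators hr]
    ext v
    simp only [BermanC, if_neg hr.ne', if_neg hmr, bermanC_eq_span n m]
    rfl

def cubePerm (σ : Fin m → Equiv.Perm (Fin n)) (γ : Equiv.Perm (Fin m)) :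
    Equiv.Perm (Fin m → Fin n) where
  toFun i k := σ k (i (γ k))
  invFun j k := (σ (γ.symm k)).symm (j (γ.symm k))
  left_inv i := by funext k; simp
  right_inv j := by funext k; simp

theorem cubePerm_symm (σ : Fin m → Equiv.Perm (Fin n)) (γ : Equiv.Perm (Fin m)) :
    (cubePerm σ γ).symm = cubePerm (fun k => (σ (γ.symm k)).symm) γ.symm :=
  Equiv.ext fun _ => rfl

def pullPattern (σ : Fin m → Equiv.Perm (Fin n)) (γ : Equiv.Perm (Fin m))
    (c : Fin m → Option (Fin n)) : Fin m → Option (Fin n) :=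
  fun k => (c (γ.symm k)).map (σ (γ.symm k)).symm

theorem codim_pullPattern (σ : Fin m → Equiv.Perm (Fin n)) (γ : Equiv.Perm (Fin m))
    (c : Fin m → Option (Fin n)) : codim (pullPattern σ γ c) = codim c := by
  simp only [codim, pullPattern, Finset.card_filter, Option.isSome_map]
  exact γ.symm.sum_comp fun k => if (c k).isSome then 1 else 0

theorem cubeInd_comp_cubePerm (σ : Fin m → Equiv.Perm (Fin n)) (γ : Equiv.Perm (Fin m))
    (c : Fin m → Option (Fin n)) : cubeInd c ∘ cubePerm σ γ = cubeInd (pullPattern σ γ c) := by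
  funext i
  simp only [cubeInd, Function.comp_apply]
  refine if_congr ?_ rfl rfl
  conv_rhs => rw [← γ.forall_congr_right]
  simp [cubePerm, pullPattern, Equiv.eq_symm_apply]

theorem comp_cubePerm_mem_cubeIndicators {r : ℕ} (σ : Fin m → Equiv.Perm (Fin n))
    (γ : Equiv.Perm (Fin m)) {g : (Fin m → Fin n) → ZMod 2} (hg : g ∈ cubeIndicators n m r) :
    g ∘ cubePerm σ γ ∈ cubeIndicators n m r := by
  obtain ⟨c, hc, rfl⟩ := hg
  exact ⟨pullPattern σ γ c, by rwa [Set.mem_ofPred_eq, codim_pullPattern],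
    (cubeInd_comp_cubePerm σ γ c).symm⟩

theorem bermanC_comp_cubePerm {r : ℕ} (σ : Fin m → Equiv.Perm (Fin n))
    (γ : Equiv.Perm (Fin m)) {v : (Fin m → Fin n) → ZMod 2} (hv : v ∈ BermanC n m r) :
    v ∘ cubePerm σ γ ∈ BermanC n m r := by
  rw [bermanC_eq_span] at hv ⊢
  exact apply_mem_span_of_forall (LinearMap.funLeft _ _ (cubePerm σ γ))
    (fun _ => comp_cubePerm_mem_cubeIndicators σ γ) hv

theorem bermanD_comp_cubePerm {r : ℕ} (σ : Fin m → Equiv.Perm (Fin n))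
    (γ : Equiv.Perm (Fin m)) {v : (Fin m → Fin n) → ZMod 2} (hv : v ∈ BermanD n m r) :
    v ∘ cubePerm σ γ ∈ BermanD n m r := by
  rw [bermanD_eq] at hv ⊢
  intro g hg
  rw [← comp_equiv_symm_dotProduct, cubePerm_symm]
  exact hv _ (comp_cubePerm_mem_cubeIndicators _ _ hg)

end Berman

theorem berman_autos_general (n m r : ℕ)
    (σ : Fin m → Equiv.Perm (Fin n)) (γ : Equiv.Perm (Fin m)) :
    (∀ v ∈ BermanD n m r,
      (fun i : Fin m → Fin n => v fun k => σ k (i k)) ∈ BermanD n m r) ∧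
    (∀ v ∈ BermanC n m r,
      (fun i : Fin m → Fin n => v fun k => σ k (i k)) ∈ BermanC n m r) ∧
    (∀ v ∈ BermanD n m r,
      (fun i : Fin m → Fin n => v fun k => i (γ k)) ∈ BermanD n m r) ∧
    (∀ v ∈ BermanC n m r,
      (fun i : Fin m → Fin n => v fun k => i (γ k)) ∈ BermanC n m r) :=
  ⟨fun _ => Berman.bermanD_comp_cubePerm σ 1, fun _ => Berman.bermanC_comp_cubePerm σ 1,
    fun _ => Berman.bermanD_comp_cubePerm (fun _ => 1) γ,
    fun _ => Berman.bermanC_comp_cubePerm (fun _ => 1) γ⟩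

/-- componentwise permutations of `{0,…,n−1}` and permutations of the `m`
positions are automorphisms of both `D_n(r,m)` and `C_n(r,m)`. -/
theorem berman_autos (n m r : ℕ) (hn : 2 ≤ n) (hm : 1 ≤ m) (hr : r ≤ m)
    (σ : Fin m → Equiv.Perm (Fin n)) (γ : Equiv.Perm (Fin m)) :
    (∀ v ∈ BermanD n m r,
      (fun i : Fin m → Fin n => v fun k => σ k (i k)) ∈ BermanD n m r) ∧
    (∀ v ∈ BermanC n m r,
      (fun i : Fin m → Fin n => v fun k => σ k (i k)) ∈ BermanC n m r) ∧
    (∀ v ∈ BermanD n m r,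
      (fun i : Fin m → Fin n => v fun k => i (γ k)) ∈ BermanD n m r) ∧
    (∀ v ∈ BermanC n m r,
      (fun i : Fin m → Fin n => v fun k => i (γ k)) ∈ BermanC n m r) :=
  berman_autos_general n m r σ γ
end

section
/- Let n ≥ 2, m ≥ 2, l ∈ {0,…,n−1}, and let H = {i ∈ {0,…,n−1}^m : i_{m−1} = l}; identify the coordinates of P_H(v) with {0,…,n−1}^{m−1} via i' ↦ (i'|l). Then P_H(C_n(r,m)) = C_n(r,m−1) whenever 0 ≤ r ≤ m−1, and P_H(D_n(r,m)) = D_n(r−1,m−1) whenever 1 ≤ r ≤ m. -/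
open Finset

/-!
Puncturing to the coordinates `(i'|l)` keeps exactly the `l`-th block of a codeword.
For `C`, block `l` of `(u + u_0|…|u + u_{n-2}|u)` is `u + u_l` with
`u_l ∈ C(r-1,m) ⊆ C(r,m)` (or `u_{n-1} = 0`), and conversely the repetition `(w|…|w)`
lies in `C(r,m+1)`.
For `D`, every block lies in `D(r-1,m)` by definition; conversely, `w ∈ D(r-1,m)` is the
`l`-th block of the word with `w` in two distinct blocks `l ≠ l'` and `0` elsewhere, whose
block sum `w + w = 0` lies in `D(r,m)`.
-/

section BermanCodes

variable {n : ℕ}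

lemma BermanC_succ_zero (m : ℕ) :
    BermanC n (m + 1) 0 = {v | ∃ c : ZMod 2, ∀ i, v i = c} := by
  simp [BermanC]

lemma BermanC_succ_of_le {m r : ℕ} (h : m + 1 ≤ r) : BermanC n (m + 1) r = Set.univ := by
  simp [BermanC, h, Nat.pos_iff_ne_zero.1 (Nat.lt_of_lt_of_le m.succ_pos h)]

lemma BermanC_succ_of_pos_of_le {m r : ℕ} (h0 : 0 < r) (hr : r ≤ m) :
    BermanC n (m + 1) r =
      {v | ∃ (u : (Fin m → Fin n) → ZMod 2) (w : Fin n → (Fin m → Fin n) → ZMod 2),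
        u ∈ BermanC n m r ∧
        (∀ l : Fin n, (l : ℕ) < n - 1 → w l ∈ BermanC n m (r - 1)) ∧
        (∀ l : Fin n, (l : ℕ) = n - 1 → w l = 0) ∧
        (∀ l : Fin n, subvec v l = u + w l)} := by
  rw [BermanC, if_neg h0.ne', if_neg (by omega)]

lemma BermanD_succ_zero (m : ℕ) : BermanD n (m + 1) 0 = {v | ∑ i, v i = 0} := by
  simp [BermanD]

lemma BermanD_succ_of_le {m r : ℕ} (h : m + 1 ≤ r) : BermanD n (m + 1) r = {0} := by
  simp [BermanD, h, Nat.pos_iff_ne_zero.1 (Nat.lt_of_lt_of_le m.succ_pos h)]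

lemma BermanD_succ_of_pos_of_le {m r : ℕ} (h0 : 0 < r) (hr : r ≤ m) :
    BermanD n (m + 1) r =
      {v | (∀ l : Fin n, subvec v l ∈ BermanD n m (r - 1)) ∧
        (fun i' => ∑ l : Fin n, subvec v l i') ∈ BermanD n m r} := by
  rw [BermanD, if_neg h0.ne', if_neg (by omega)]

lemma BermanD_self (m : ℕ) : BermanD n m m = {0} := by
  cases m with
  | zero => rfl
  | succ m => exact BermanD_succ_of_le le_rfl

lemma zero_mem_BermanD (m r : ℕ) : (0 : (Fin m → Fin n) → ZMod 2) ∈ BermanD n m r := by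
  induction m generalizing r with
  | zero => rfl
  | succ m ih =>
    obtain rfl | h0 := Nat.eq_zero_or_pos r
    · simp [BermanD_succ_zero]
    rcases le_or_gt r m with hr | hr
    · rw [BermanD_succ_of_pos_of_le h0 hr]
      exact ⟨fun _ => ih _, by simp only [subvec, Pi.zero_apply, sum_const_zero]; exact ih r⟩
    · simp [BermanD_succ_of_le hr]

lemma const_mem_BermanC (m r : ℕ) (c : ZMod 2) :
    (fun _ => c : (Fin m → Fin n) → ZMod 2) ∈ BermanC n m r := by
  induction m generalizing r c with
  | zero => trivial
  | succ m ih =>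
    obtain rfl | h0 := Nat.eq_zero_or_pos r
    · rw [BermanC_succ_zero]
      exact ⟨c, fun _ => rfl⟩
    rcases le_or_gt r m with hr | hr
    · rw [BermanC_succ_of_pos_of_le h0 hr]
      exact ⟨fun _ => c, 0, ih r c, fun _ _ => ih (r - 1) 0, fun _ _ => rfl,
        fun _ => by ext; simp [subvec]⟩
    · simp [BermanC_succ_of_le hr]

lemma zero_mem_BermanC (m r : ℕ) : (0 : (Fin m → Fin n) → ZMod 2) ∈ BermanC n m r :=
  const_mem_BermanC m r 0

lemma exists_eq_const_of_mem_BermanC_zero {m : ℕ} {w : (Fin m → Fin n) → ZMod 2}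
    (hw : w ∈ BermanC n m 0) : ∃ c : ZMod 2, w = fun _ => c := by
  cases m with
  | zero => exact ⟨w Fin.elim0, funext fun i => congrArg w (Subsingleton.elim _ _)⟩
  | succ m =>
    rw [BermanC_succ_zero] at hw
    obtain ⟨c, hc⟩ := hw
    exact ⟨c, funext hc⟩

lemma add_mem_BermanC {m r : ℕ} {a b : (Fin m → Fin n) → ZMod 2}
    (ha : a ∈ BermanC n m r) (hb : b ∈ BermanC n m r) : a + b ∈ BermanC n m r := by
  induction m generalizing r with
  | zero => trivial
  | succ m ih =>
    obtain rfl | h0 := Nat.eq_zero_or_pos r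
    · rw [BermanC_succ_zero] at *
      obtain ⟨c, hc⟩ := ha
      obtain ⟨d, hd⟩ := hb
      exact ⟨c + d, fun i => by simp [hc i, hd i]⟩
    rcases le_or_gt r m with hr | hr
    · rw [BermanC_succ_of_pos_of_le h0 hr] at *
      obtain ⟨u, w, hu, hw, hw0, hs⟩ := ha
      obtain ⟨u', w', hu', hw', hw0', hs'⟩ := hb
      refine ⟨u + u', w + w', ih hu hu', fun l hl => ih (hw l hl) (hw' l hl),
        fun l hl => by simp [hw0 l hl, hw0' l hl], fun l => ?_⟩
      change subvec a l + subvec b l = _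
      rw [hs l, hs' l, Pi.add_apply]
      abel
    · simp [BermanC_succ_of_le hr]

lemma BermanC_subset_succ (m r : ℕ) : BermanC n m r ⊆ BermanC n m (r + 1) := by
  induction m generalizing r with
  | zero => exact fun _ _ => trivial
  | succ m ih =>
    intro v hv
    rcases le_or_gt (r + 1) m with hr | hr
    · rw [BermanC_succ_of_pos_of_le r.succ_pos hr]
      obtain rfl | h0 := Nat.eq_zero_or_pos r
      · obtain ⟨c, rfl⟩ := exists_eq_const_of_mem_BermanC_zero hv
        exact ⟨fun _ => c, 0, const_mem_BermanC m 1 c, fun _ _ => zero_mem_BermanC m 0,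
          fun _ _ => rfl, fun _ => by ext; simp [subvec]⟩
      · rw [BermanC_succ_of_pos_of_le h0 (by omega)] at hv
        obtain ⟨u, w, hu, hw, hw0, hs⟩ := hv
        refine ⟨u, w, ih r hu, fun l hl => ?_, hw0, hs⟩
        simpa [Nat.sub_add_cancel h0] using ih (r - 1) (hw l hl)
    · simp [BermanC_succ_of_le hr]

lemma subvec_mem_BermanC {m r : ℕ} (l : Fin n) (hr : r ≤ m)
    {v : (Fin (m + 1) → Fin n) → ZMod 2} (hv : v ∈ BermanC n (m + 1) r) :
    subvec v l ∈ BermanC n m r := by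
  obtain rfl | h0 := Nat.eq_zero_or_pos r
  · obtain ⟨c, rfl⟩ := exists_eq_const_of_mem_BermanC_zero hv
    exact const_mem_BermanC m 0 c
  rw [BermanC_succ_of_pos_of_le h0 hr] at hv
  obtain ⟨u, w, hu, hw, hw0, hs⟩ := hv
  rw [hs l]
  refine add_mem_BermanC hu ?_
  rcases lt_or_eq_of_le (Nat.le_sub_one_of_lt l.isLt) with hl | hl
  · simpa [Nat.sub_add_cancel h0] using BermanC_subset_succ m (r - 1) (hw l hl)
  · simpa [hw0 l hl] using zero_mem_BermanC m r

/-- The word of length `n^(m+1)` whose `l`-th block is `w` for `l ∈ s` and `0` otherwise. -/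
def replicateOn {m : ℕ} (s : Finset (Fin n)) (w : (Fin m → Fin n) → ZMod 2) :
    (Fin (m + 1) → Fin n) → ZMod 2 :=
  fun i => if i (Fin.last m) ∈ s then w (Fin.init i) else 0

@[simp]
lemma subvec_replicateOn {m : ℕ} (s : Finset (Fin n)) (w : (Fin m → Fin n) → ZMod 2)
    (l : Fin n) : subvec (replicateOn s w) l = if l ∈ s then w else 0 := by
  ext i'
  split_ifs <;> simp [replicateOn, subvec, *]

lemma sum_subvec_replicateOn {m : ℕ} (s : Finset (Fin n)) (w : (Fin m → Fin n) → ZMod 2) :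
    (fun i' => ∑ l : Fin n, subvec (replicateOn s w) l i') = s.card • w := by
  ext i'
  simp [apply_ite (fun x : (Fin m → Fin n) → ZMod 2 => x i'), Finset.sum_ite_mem]

lemma replicateOn_univ_mem_BermanC {m r : ℕ} (hr : r ≤ m) {w : (Fin m → Fin n) → ZMod 2}
    (hw : w ∈ BermanC n m r) : replicateOn univ w ∈ BermanC n (m + 1) r := by
  obtain rfl | h0 := Nat.eq_zero_or_pos r
  · obtain ⟨c, rfl⟩ := exists_eq_const_of_mem_BermanC_zero hw
    convert const_mem_BermanC (m + 1) 0 c using 1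
    ext
    simp [replicateOn]
  rw [BermanC_succ_of_pos_of_le h0 hr]
  exact ⟨w, 0, hw, fun _ _ => zero_mem_BermanC m _, fun _ _ => rfl, fun _ => by simp⟩

lemma replicateOn_pair_mem_BermanD {m r : ℕ} {l l' : Fin n} (hne : l ≠ l') (h0 : 0 < r)
    (hr : r ≤ m) {w : (Fin m → Fin n) → ZMod 2} (hw : w ∈ BermanD n m (r - 1)) :
    replicateOn {l, l'} w ∈ BermanD n (m + 1) r := by
  rw [BermanD_succ_of_pos_of_le h0 hr]
  refine ⟨fun k => ?_, ?_⟩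
  · rw [subvec_replicateOn]
    split_ifs
    exacts [hw, zero_mem_BermanD m _]
  · have hww : (2 • w : (Fin m → Fin n) → ZMod 2) = 0 := funext fun i => CharTwo.two_nsmul _
    rw [sum_subvec_replicateOn, card_pair hne, hww]
    exact zero_mem_BermanD m r

lemma image_subvec_BermanC {m r : ℕ} (l : Fin n) (hr : r ≤ m) :
    (fun v : (Fin (m + 1) → Fin n) → ZMod 2 => subvec v l) '' BermanC n (m + 1) r =
      BermanC n m r :=
  Set.Subset.antisymm (Set.image_subset_iff.2 fun _ hv => subvec_mem_BermanC l hr hv)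
    fun w hw => ⟨replicateOn univ w, replicateOn_univ_mem_BermanC hr hw, by simp⟩

lemma image_subvec_BermanD {m r : ℕ} (hn : 2 ≤ n) (l : Fin n) (h0 : 1 ≤ r) (hr : r ≤ m + 1) :
    (fun v : (Fin (m + 1) → Fin n) → ZMod 2 => subvec v l) '' BermanD n (m + 1) r =
      BermanD n m (r - 1) := by
  rcases hr.lt_or_eq with hr | rfl
  · have hr : r ≤ m := Nat.le_of_lt_succ hr
    obtain ⟨l', hne⟩ := Fintype.exists_ne_of_one_lt_card (by rw [Fintype.card_fin]; exact hn) l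
    refine Set.Subset.antisymm (Set.image_subset_iff.2 fun v hv => ?_) fun w hw =>
      ⟨replicateOn {l, l'} w, replicateOn_pair_mem_BermanD hne.symm h0 hr hw, by simp⟩
    rw [BermanD_succ_of_pos_of_le h0 hr] at hv
    exact hv.1 l
  · rw [Nat.add_sub_cancel, BermanD_self, BermanD_self, Set.image_singleton]
    rfl

end BermanCodes

theorem berman_puncture_last_general (n m r : ℕ) (hn : 2 ≤ n) (l : Fin n) :
    (r ≤ m →
      (fun v : (Fin (m + 1) → Fin n) → ZMod 2 => subvec v l) '' BermanC n (m + 1) r =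
        BermanC n m r) ∧
    (1 ≤ r → r ≤ m + 1 →
      (fun v : (Fin (m + 1) → Fin n) → ZMod 2 => subvec v l) '' BermanD n (m + 1) r =
        BermanD n m (r - 1)) :=
  ⟨image_subvec_BermanC l, image_subvec_BermanD hn l⟩

/-- puncturing to the coordinates with last index component equal to `l`
sends `C_n(r,m+1)` to `C_n(r,m)` (for `r ≤ m`) and `D_n(r,m+1)` to `D_n(r−1,m)`
(for `1 ≤ r ≤ m+1`).  (Here the length-`n^{m+1}` code plays the role of the code of
length `n^m`, `m ≥ 2`, in the paper.) -/
theorem berman_puncture_last (n m r : ℕ) (hn : 2 ≤ n) (hm : 1 ≤ m) (l : Fin n) :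
    (r ≤ m →
      (fun v : (Fin (m + 1) → Fin n) → ZMod 2 => subvec v l) '' BermanC n (m + 1) r =
        BermanC n m r) ∧
    (1 ≤ r → r ≤ m + 1 →
      (fun v : (Fin (m + 1) → Fin n) → ZMod 2 => subvec v l) '' BermanD n (m + 1) r =
        BermanD n m (r - 1)) :=
  berman_puncture_last_general n m r hn l
end
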